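/- arXiv:2009.12008 — 6 statements merged into one kernel-verified Lean document; each statement's English description precedes it below -/
import Mathlib

section
/- The eigenvalues of the normalized Laplacian L̃ = D^{†/2} L D^{†/2} of a matrix-weighted graph are bounded above by 2, where D^{†/2} denotes the Moore–Penrose pseudoinverse of the positive semidefinite square root of the degree matrix D. -/
open Matrix Finset

noncomputable section

/-- The adjacency matrix of a matrix-weighted graph: the `kn × kn` block matrix
whose `(u,v)` block is the weight matrix `W u v`. -/
def mwAdj (n k : ℕ) (W : Fin n → Fin n → Matrix (Fin k) (Fin k) ℝ) :
    Matrix (Fin n × Fin k) (Fin n × Fin k) ℝ :=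
  fun p q => W p.1 q.1 p.2 q.2

/-- The degree matrix of a matrix-weighted graph: block diagonal, with
`(v,v)` block `D_v = ∑ u, W u v`. -/
def mwDeg (n k : ℕ) (W : Fin n → Fin n → Matrix (Fin k) (Fin k) ℝ) :
    Matrix (Fin n × Fin k) (Fin n × Fin k) ℝ :=
  fun p q => if p.1 = q.1 then (∑ u, W u p.1) p.2 q.2 else 0

/-- The Laplacian `L = D - A` of a matrix-weighted graph. -/
def mwLap (n k : ℕ) (W : Fin n → Fin n → Matrix (Fin k) (Fin k) ℝ) :
    Matrix (Fin n × Fin k) (Fin n × Fin k) ℝ :=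
  mwDeg n k W - mwAdj n k W

/-!
Put `y = P x`. The form `D + A` is positive semidefinite, being half of
`∑ u v, (x_u + x_v)ᵀ W(u,v) (x_u + x_v)`; hence `yᵀ L y ≤ 2 yᵀ D y = 2 ‖R P x‖²`.
The Penrose equations make `P` symmetric and `R P` an orthogonal projection, so
`xᵀ (P L P) x = yᵀ L y ≤ 2 ‖x‖²`, and this Rayleigh-quotient bound caps every real eigenvalue.
-/

namespace Matrix

variable {ι : Type*} [Fintype ι]

theorem le_of_mem_spectrum_of_dotProduct_mulVec_le [DecidableEq ι] {M : Matrix ι ι ℝ} {c μ : ℝ}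
    (hM : ∀ x, x ⬝ᵥ (M *ᵥ x) ≤ c * (x ⬝ᵥ x)) (hμ : μ ∈ spectrum ℝ M) : μ ≤ c := by
  rw [← spectrum_toLin', ← Module.End.hasEigenvalue_iff_mem_spectrum] at hμ
  obtain ⟨x, hx, hx0⟩ := hμ.exists_hasEigenvector
  have hMx : M *ᵥ x = μ • x := by simpa using Module.End.mem_eigenspace_iff.mp hx
  have hxx : 0 < x ⬝ᵥ x := (Fintype.sum_nonneg fun i => mul_self_nonneg (x i)).lt_of_ne'
    (dotProduct_self_eq_zero.not.mpr hx0)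
  have hμx := hM x
  rw [hMx, dotProduct_smul, smul_eq_mul] at hμx
  exact le_of_mul_le_mul_right hμx hxx

section CommSemiring

variable {α : Type*} [CommSemiring α]

theorem dotProduct_transpose_mul_mulVec {m n p : Type*} [Fintype m] [Fintype n] [Fintype p]
    (A : Matrix m n α) (B : Matrix m p α) (x : n → α) (y : p → α) :
    x ⬝ᵥ ((Aᵀ * B) *ᵥ y) = (A *ᵥ x) ⬝ᵥ (B *ᵥ y) := by
  rw [← mulVec_mulVec, dotProduct_mulVec, vecMul_transpose]

/-- The Penrose equations, with transposes in place of adjoints. -/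
structure IsMoorePenroseInverse {m n : Type*} [Fintype m] [Fintype n]
    (A : Matrix m n α) (B : Matrix n m α) : Prop where
  mul_mul_left : A * B * A = A
  mul_mul_right : B * A * B = B
  isSymm_mul_left : (A * B).IsSymm
  isSymm_mul_right : (B * A).IsSymm

theorem IsMoorePenroseInverse.isIdempotentElem_mul_left {m n : Type*} [Fintype m] [Fintype n]
    {A : Matrix m n α} {B : Matrix n m α} (h : IsMoorePenroseInverse A B) :
    IsIdempotentElem (A * B) := by
  rw [IsIdempotentElem, ← Matrix.mul_assoc, h.mul_mul_left]

theorem IsMoorePenroseInverse.isSymm {A B : Matrix ι ι α} (h : IsMoorePenroseInverse A B)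
    (hA : A.IsSymm) : B.IsSymm := by
  have hAB : A * B = Bᵀ * A := by
    rw [← h.isSymm_mul_left.eq, transpose_mul, hA.eq]
  have hBA : B * A = A * Bᵀ := by
    rw [← h.isSymm_mul_right.eq, transpose_mul, hA.eq]
  have hB : B = B * Bᵀ * A := by
    rw [mul_assoc, ← hAB, ← mul_assoc, h.mul_mul_right]
  have hB' : B = B * A * Bᵀ := calc
    B = B * Bᵀ * (A * B * A) := by rw [h.mul_mul_left]; exact hB
    _ = B * (B * A) := by simp only [← mul_assoc]; rw [← hB, mul_assoc]
    _ = B * A * Bᵀ := by rw [mul_assoc B A, ← hBA]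
  rw [IsSymm, hB', transpose_mul, transpose_mul, transpose_transpose, hA.eq, mul_assoc]

end CommSemiring

theorem IsSymm.dotProduct_mulVec_le_of_isIdempotentElem {α : Type*} [CommRing α] [LinearOrder α]
    [IsStrictOrderedRing α] {Q : Matrix ι ι α} (hQ : Q.IsSymm) (hQQ : IsIdempotentElem Q)
    (x : ι → α) : (Q *ᵥ x) ⬝ᵥ (Q *ᵥ x) ≤ x ⬝ᵥ x := by
  have hQx : (Q *ᵥ x) ⬝ᵥ (Q *ᵥ x) = x ⬝ᵥ (Q *ᵥ x) := by
    rw [← dotProduct_transpose_mulVec, mulVec_mulVec, hQ.eq, hQQ.eq]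
  have hsq : 0 ≤ (x - Q *ᵥ x) ⬝ᵥ (x - Q *ᵥ x) := Fintype.sum_nonneg fun i => mul_self_nonneg _
  rw [sub_dotProduct, dotProduct_sub, dotProduct_sub, dotProduct_comm (Q *ᵥ x) x, hQx] at hsq
  linarith

end Matrix

section MatrixWeightedGraph

variable {n k : ℕ} (W : Fin n → Fin n → Matrix (Fin k) (Fin k) ℝ) (x : Fin n × Fin k → ℝ)

theorem mwAdj_mulVec_apply (u : Fin n) (i : Fin k) :
    (mwAdj n k W *ᵥ x) (u, i) = ∑ v, (W u v *ᵥ x.curry v) i := by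
  simp only [mulVec, dotProduct, mwAdj, Fintype.sum_prod_type, Function.curry_apply]

theorem mwDeg_mulVec_apply (v : Fin n) (i : Fin k) :
    (mwDeg n k W *ᵥ x) (v, i) = ∑ u, (W u v *ᵥ x.curry v) i := by
  simp only [mulVec, dotProduct, mwDeg, Fintype.sum_prod_type, Function.curry_apply, ite_mul,
    zero_mul, sum_ite_irrel, sum_const_zero, sum_ite_eq, mem_univ, if_true, Matrix.sum_apply, sum_mul]
  exact sum_comm

theorem dotProduct_mwAdj_mulVec :
    x ⬝ᵥ (mwAdj n k W *ᵥ x) = ∑ u, ∑ v, x.curry u ⬝ᵥ (W u v *ᵥ x.curry v) := by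
  simp only [dotProduct, Fintype.sum_prod_type, mwAdj_mulVec_apply, mul_sum]
  exact sum_congr rfl fun u _ => sum_comm

theorem dotProduct_mwDeg_mulVec :
    x ⬝ᵥ (mwDeg n k W *ᵥ x) = ∑ u, ∑ v, x.curry v ⬝ᵥ (W u v *ᵥ x.curry v) := by
  simp only [dotProduct, Fintype.sum_prod_type, mwDeg_mulVec_apply, mul_sum,
    Function.curry_apply]
  exact (sum_congr rfl fun v _ => sum_comm).trans sum_comm

theorem dotProduct_mwDeg_add_mwAdj_mulVec_nonneg (hpsd : ∀ u v, (W u v).PosSemidef)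
    (hsym : ∀ u v, W u v = W v u) : 0 ≤ x ⬝ᵥ ((mwDeg n k W + mwAdj n k W) *ᵥ x) := by
  set y := x.curry
  have hexpand : ∀ u v, (y u + y v) ⬝ᵥ (W u v *ᵥ (y u + y v)) =
      y u ⬝ᵥ (W u v *ᵥ y u) + y u ⬝ᵥ (W u v *ᵥ y v) + y v ⬝ᵥ (W u v *ᵥ y u) +
        y v ⬝ᵥ (W u v *ᵥ y v) := fun u v => by
    simp only [mulVec_add, dotProduct_add, add_dotProduct]
    ring
  have hdeg : ∑ u, ∑ v, y v ⬝ᵥ (W u v *ᵥ y v) = x ⬝ᵥ (mwDeg n k W *ᵥ x) :=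
    (dotProduct_mwDeg_mulVec W x).symm
  have hadj : ∑ u, ∑ v, y u ⬝ᵥ (W u v *ᵥ y v) = x ⬝ᵥ (mwAdj n k W *ᵥ x) :=
    (dotProduct_mwAdj_mulVec W x).symm
  have hdeg' : ∑ u, ∑ v, y u ⬝ᵥ (W u v *ᵥ y u) = x ⬝ᵥ (mwDeg n k W *ᵥ x) := by
    rw [← hdeg, sum_comm]
    exact sum_congr rfl fun u _ => sum_congr rfl fun v _ => by rw [hsym]
  have hadj' : ∑ u, ∑ v, y v ⬝ᵥ (W u v *ᵥ y u) = x ⬝ᵥ (mwAdj n k W *ᵥ x) := by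
    rw [← hadj, sum_comm]
    exact sum_congr rfl fun u _ => sum_congr rfl fun v _ => by rw [hsym]
  have hsum : 0 ≤ ∑ u, ∑ v, (y u + y v) ⬝ᵥ (W u v *ᵥ (y u + y v)) :=
    sum_nonneg fun u _ => sum_nonneg fun v _ =>
      by simpa using (hpsd u v).dotProduct_mulVec_nonneg (y u + y v)
  simp only [hexpand, sum_add_distrib, hdeg, hadj, hdeg', hadj'] at hsum
  rw [add_mulVec, dotProduct_add]
  linarith

theorem dotProduct_mwLap_mulVec_le (hpsd : ∀ u v, (W u v).PosSemidef)
    (hsym : ∀ u v, W u v = W v u) :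
    x ⬝ᵥ (mwLap n k W *ᵥ x) ≤ 2 * (x ⬝ᵥ (mwDeg n k W *ᵥ x)) := by
  have h := dotProduct_mwDeg_add_mwAdj_mulVec_nonneg W x hpsd hsym
  rw [add_mulVec, dotProduct_add] at h
  rw [mwLap, sub_mulVec, dotProduct_sub]
  linarith

end MatrixWeightedGraph

theorem matrix_weighted_normalized_laplacian_eigenvalue_le_two_general
    (n k : ℕ)
    (W : Fin n → Fin n → Matrix (Fin k) (Fin k) ℝ)
    (hpsd : ∀ u v, (W u v).PosSemidef)
    (hsym : ∀ u v, W u v = W v u)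
    (R : Matrix (Fin n × Fin k) (Fin n × Fin k) ℝ)
    (hRpsd : R.PosSemidef) (hRsq : R * R = mwDeg n k W)
    (P : Matrix (Fin n × Fin k) (Fin n × Fin k) ℝ)
    (hP1 : R * P * R = R) (hP2 : P * R * P = P)
    (hP3 : (R * P)ᵀ = R * P) (hP4 : (P * R)ᵀ = P * R) :
    ∀ μ ∈ spectrum ℝ (P * mwLap n k W * P), μ ≤ 2 := by
  have hR : R.IsSymm := isHermitian_iff_isSymm.mp hRpsd.isHermitian
  have hP : IsMoorePenroseInverse R P := ⟨hP1, hP2, hP3, hP4⟩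
  have hPt : Pᵀ = P := (hP.isSymm hR).eq
  refine fun μ => le_of_mem_spectrum_of_dotProduct_mulVec_le fun x => ?_
  calc x ⬝ᵥ ((P * mwLap n k W * P) *ᵥ x) = (P *ᵥ x) ⬝ᵥ (mwLap n k W *ᵥ (P *ᵥ x)) := by
        nth_rw 1 [← hPt]
        rw [mul_assoc, dotProduct_transpose_mul_mulVec, mulVec_mulVec]
    _ ≤ 2 * ((P *ᵥ x) ⬝ᵥ (mwDeg n k W *ᵥ (P *ᵥ x))) := dotProduct_mwLap_mulVec_le W _ hpsd hsym
    _ = 2 * (((R * P) *ᵥ x) ⬝ᵥ ((R * P) *ᵥ x)) := by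
        rw [← hRsq]
        nth_rw 1 [← hR.eq]
        rw [dotProduct_transpose_mul_mulVec, mulVec_mulVec]
    _ ≤ 2 * (x ⬝ᵥ x) := by
        gcongr
        exact hP.isSymm_mul_left.dotProduct_mulVec_le_of_isIdempotentElem
          hP.isIdempotentElem_mul_left x

/-- The eigenvalues of the normalized Laplacian `L̃ = D^{†/2} L D^{†/2}` of a
matrix-weighted graph are bounded above by `2`.  Here `R` is the positive
semidefinite square root of the degree matrix `D` (characterized uniquely by
`R` PSD and `R * R = D`) and `P` is its Moore–Penrose pseudoinverse
(characterized uniquely by the four Penrose equations). -/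
theorem matrix_weighted_normalized_laplacian_eigenvalue_le_two
    (n k : ℕ) (G : SimpleGraph (Fin n))
    (W : Fin n → Fin n → Matrix (Fin k) (Fin k) ℝ)
    (hpsd : ∀ u v, (W u v).PosSemidef)
    (hsym : ∀ u v, W u v = W v u)
    (h0 : ∀ u v, ¬ G.Adj u v → W u v = 0)
    (R : Matrix (Fin n × Fin k) (Fin n × Fin k) ℝ)
    (hRpsd : R.PosSemidef) (hRsq : R * R = mwDeg n k W)
    (P : Matrix (Fin n × Fin k) (Fin n × Fin k) ℝ)
    (hP1 : R * P * R = R) (hP2 : P * R * P = P)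
    (hP3 : (R * P)ᵀ = R * P) (hP4 : (P * R)ᵀ = P * R) :
    ∀ μ ∈ spectrum ℝ (P * mwLap n k W * P), μ ≤ 2 :=
  matrix_weighted_normalized_laplacian_eigenvalue_le_two_general n k W hpsd hsym R hRpsd hRsq P hP1
    hP2 hP3 hP4
end
end

section
/- Let (G,W) be a matrix-weighted graph with n vertices and k×k weights, with Laplacian L_W having eigenvalues λ_1(L_W) ≤ … ≤ λ_{nk}(L_W), and let L_{tr W} be the Laplacian of the scalar-weighted graph (G, tr W), with eigenvalues λ_1(L_{tr W}) ≤ … ≤ λ_n(L_{tr W}). Then ∑_{i=1}^{k} λ_{k+i}(L_W) ≤ λ_2(L_{tr W}) ≤ λ_n(L_{tr W}) ≤ ∑_{i=1}^{k} λ_{(n−1)k+i}(L_W). -/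
open Matrix Finset

noncomputable section

/-- The Laplacian of the scalar-weighted trace graph `(G, tr W)`: off-diagonal
entries `-tr (W u v)`, diagonal entries `∑ u, tr (W u v)`. -/
def trLap (n k : ℕ) (W : Fin n → Fin n → Matrix (Fin k) (Fin k) ℝ) :
    Matrix (Fin n) (Fin n) ℝ :=
  fun u v => if u = v then ∑ w, (W w v).trace else -(W u v).trace

open scoped Kronecker

/-!
Both bounds are Ky Fan's trace inequalities for `L_W`: for any `m` orthonormal vectors the sum of
their Rayleigh quotients lies between the sums of the `m` smallest and of the `m` largest
eigenvalues. Since loops carry no weight, the partial trace of `L_W` over the fibre `ℝᵏ` is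
`L_{tr W}`; so if `x₁, …, x_r` are orthonormal eigenvectors of `L_{tr W}`, the `rk` orthonormal
vectors `x_j ⊗ e_a` give `L_W` the total Rayleigh quotient `∑ ν(x_j)`. The top eigenvector yields
the upper bound. The two lowest yield `∑_{i ≤ 2k} λ_i ≤ ν_1 + ν_2`, and the lower bound follows
because `λ_i ≥ 0` (`2 L_W = ∑_{u,v} (e_u - e_v)(e_u - e_v)ᵀ ⊗ W(u,v)` is positive semidefinite)
while `ν_1 ≤ 0` (the all-ones vector is in the kernel of `L_{tr W}`).
-/

section Bathtub

variable {ι : Type*} [Fintype ι]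

theorem le_card_of_sum_eq {c : ι → ℝ} {m : ℕ} (hc1 : ∀ p, c p ≤ 1) (hsum : ∑ p, c p = m) :
    m ≤ Fintype.card ι := by
  have : (m : ℝ) ≤ Fintype.card ι := by
    simpa [← hsum] using Finset.sum_le_sum fun p (_ : p ∈ univ) => hc1 p
  exact_mod_cast this

theorem sum_ite_lt_comp_equiv {N m : ℕ} (e : ι ≃ Fin N) (hm : m ≤ N) (g : ℕ → ℝ) :
    ∑ p, (if (e p : ℕ) < m then g (e p) else 0) = ∑ i ∈ range m, g i := by
  rw [e.sum_comp (fun i : Fin N => if (i : ℕ) < m then g i else 0),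
    Fin.sum_univ_eq_sum_range (fun i => if i < m then g i else 0), ← sum_filter]
  congr 1
  ext i
  simp only [mem_filter, mem_range]
  omega

/-- Bathtub principle: weights in `[0, 1]` of total mass `m` give an increasing sequence the
smallest weighted sum when they sit on its first `m` terms. -/
theorem sum_range_le_sum_mul_of_monotoneOn {N m : ℕ} (e : ι ≃ Fin N) {lam : ℕ → ℝ}
    (hlam : MonotoneOn lam (Set.Iio N)) {c : ι → ℝ} (hc0 : ∀ p, 0 ≤ c p)
    (hc1 : ∀ p, c p ≤ 1) (hsum : ∑ p, c p = m) :
    ∑ i ∈ range m, lam i ≤ ∑ p, lam (e p) * c p := by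
  have hm : m ≤ N := by simpa [Fintype.card_congr e] using le_card_of_sum_eq hc1 hsum
  set t := lam (m - 1)
  set ind : ι → ℝ := fun p => if (e p : ℕ) < m then 1 else 0
  have hind : ∑ p, ind p = m := by
    simpa only [sum_const, card_range, nsmul_eq_mul, mul_one] using
      sum_ite_lt_comp_equiv e hm (fun _ => (1 : ℝ))
  -- `t` separates the terms carrying the mass `ind` from the others
  have hterm : ∀ p, 0 ≤ (lam (e p) - t) * (c p - ind p) := by
    intro p
    have hp := (e p).isLt
    by_cases h : (e p : ℕ) < m
    · have : lam (e p) ≤ t := hlam hp (by simp; omega) (by omega)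
      exact mul_nonneg_of_nonpos_of_nonpos (by linarith) (by simp [ind, h, hc1 p])
    · have : t ≤ lam (e p) := hlam (by simp; omega) hp (by omega)
      exact mul_nonneg (by linarith) (by simp [ind, h, hc0 p])
  calc ∑ i ∈ range m, lam i = ∑ p, lam (e p) * ind p := by
        rw [← sum_ite_lt_comp_equiv e hm lam]; simp [ind]
    _ ≤ ∑ p, (lam (e p) * ind p + (lam (e p) - t) * (c p - ind p)) :=
        sum_le_sum fun p _ => le_add_of_nonneg_right (hterm p)
    _ = ∑ p, lam (e p) * c p + t * (∑ p, ind p - ∑ p, c p) := by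
        rw [mul_sub, mul_sum, mul_sum, ← sum_sub_distrib, ← sum_add_distrib]
        exact sum_congr rfl fun p _ => by ring
    _ = ∑ p, lam (e p) * c p := by rw [hind, hsum, sub_self, mul_zero, add_zero]

theorem sum_mul_le_sum_range_of_monotoneOn {N m : ℕ} (e : ι ≃ Fin N) {lam : ℕ → ℝ}
    (hlam : MonotoneOn lam (Set.Iio N)) {c : ι → ℝ} (hc0 : ∀ p, 0 ≤ c p)
    (hc1 : ∀ p, c p ≤ 1) (hsum : ∑ p, c p = m) :
    ∑ p, lam (e p) * c p ≤ ∑ i ∈ range m, lam (N - m + i) := by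
  have hm : m ≤ N := by simpa [Fintype.card_congr e] using le_card_of_sum_eq hc1 hsum
  have hrev : MonotoneOn (fun i => -lam (N - 1 - i)) (Set.Iio N) := by
    intro i hi j hj hij
    simp only [Set.mem_Iio] at hi hj
    exact neg_le_neg (hlam (by simp; omega) (by simp; omega) (by omega))
  have key := sum_range_le_sum_mul_of_monotoneOn (e.trans Fin.revPerm) hrev hc0 hc1 hsum
  have hval : ∀ p, N - 1 - ((e.trans Fin.revPerm) p : ℕ) = e p := by
    intro p; have := (e p).isLt; simp; omega
  simp only [hval, neg_mul, sum_neg_distrib, neg_le_neg_iff] at key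
  rw [← sum_range_reflect]
  refine key.trans_eq (sum_congr rfl fun i hi => ?_)
  rw [mem_range] at hi
  congr 1
  omega

end Bathtub

namespace Matrix

variable {ι κ ν : Type*}

theorem trace_mul_diagonal_mul_transpose [Fintype ι] [DecidableEq ι] [Fintype κ]
    (M : Matrix κ ι ℝ) (d : ι → ℝ) : trace (M * diagonal d * Mᵀ) = ∑ p, d p * (Mᵀ * M) p p := by
  rw [trace_mul_cycle]
  simp [trace, mul_diagonal, mul_comm]

theorem diag_transpose_mul_self_nonneg [Fintype κ] (M : Matrix κ ι ℝ) (p : ι) :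
    0 ≤ (Mᵀ * M) p p := by
  simpa [mul_apply] using sum_nonneg fun j (_ : j ∈ univ) => mul_self_nonneg (M j p)

/-- `P = Mᵀ * M` is a symmetric idempotent, so `P p p = ∑ q, P p q ^ 2 ≥ P p p ^ 2`. -/
theorem diag_transpose_mul_self_le_one [Fintype ι] [Fintype κ] [DecidableEq κ]
    {M : Matrix κ ι ℝ} (hM : M * Mᵀ = 1) (p : ι) : (Mᵀ * M) p p ≤ 1 := by
  set P := Mᵀ * M
  have hidem : P * P = P := by
    simp only [P, Matrix.mul_assoc, ← Matrix.mul_assoc M, hM, Matrix.one_mul]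
  have hsymm : ∀ q, P q p = P p q := fun q => by simp [P, mul_apply, mul_comm]
  have hsq : P p p * P p p ≤ P p p := by
    conv_rhs => rw [← hidem]
    rw [mul_apply]
    exact single_le_sum (f := fun q => P p q * P q p)
      (fun q _ => by rw [hsymm]; exact mul_self_nonneg _) (mem_univ p)
  nlinarith [diag_transpose_mul_self_nonneg M p]

theorem sum_diag_transpose_mul_self [Fintype ι] [Fintype κ] [DecidableEq κ]
    {M : Matrix κ ι ℝ} (hM : M * Mᵀ = 1) : ∑ p, (Mᵀ * M) p p = Fintype.card κ := by
  change trace (Mᵀ * M) = _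
  rw [trace_mul_comm, hM, trace_one]

theorem trace_conj_conj_diagonal [Fintype ι] [DecidableEq ι] [Fintype κ] (V : Matrix κ ι ℝ)
    (U : Matrix ι ι ℝ) (d : ι → ℝ) :
    trace (V * (U * diagonal d * Uᵀ) * Vᵀ) = ∑ p, d p * ((V * U)ᵀ * (V * U)) p p := by
  rw [← trace_mul_diagonal_mul_transpose]
  simp only [transpose_mul, Matrix.mul_assoc]

theorem mul_mul_transpose_mul_eq_one [Fintype ι] [DecidableEq ι] [DecidableEq κ]
    {U : Matrix ι ι ℝ} (hU : U * Uᵀ = 1) {V : Matrix κ ι ℝ} (hV : V * Vᵀ = 1) :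
    (V * U) * (V * U)ᵀ = 1 := by
  rw [transpose_mul, Matrix.mul_assoc, ← Matrix.mul_assoc U, hU, Matrix.one_mul, hV]

section KyFan

variable [Fintype ι] [DecidableEq ι] [Fintype κ] [DecidableEq κ] {N : ℕ} (e : ι ≃ Fin N)
  {lam : ℕ → ℝ} (hlam : MonotoneOn lam (Set.Iio N)) {U : Matrix ι ι ℝ} (hU : U * Uᵀ = 1)
include hlam hU

/-- Ky Fan: in the eigenbasis the compression by `V` puts weights in `[0, 1]`, of total mass
`card κ`, on the eigenvalues. -/
theorem sum_range_le_trace_conj {V : Matrix κ ι ℝ} (hV : V * Vᵀ = 1) :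
    ∑ i ∈ range (Fintype.card κ), lam i
      ≤ trace (V * (U * diagonal (fun p => lam (e p)) * Uᵀ) * Vᵀ) := by
  have hM := mul_mul_transpose_mul_eq_one hU hV
  rw [trace_conj_conj_diagonal]
  exact sum_range_le_sum_mul_of_monotoneOn e hlam (diag_transpose_mul_self_nonneg _)
    (diag_transpose_mul_self_le_one hM) (sum_diag_transpose_mul_self hM)

theorem trace_conj_le_sum_range {V : Matrix κ ι ℝ} (hV : V * Vᵀ = 1) :
    trace (V * (U * diagonal (fun p => lam (e p)) * Uᵀ) * Vᵀ)
      ≤ ∑ i ∈ range (Fintype.card κ), lam (N - Fintype.card κ + i) := by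
  have hM := mul_mul_transpose_mul_eq_one hU hV
  rw [trace_conj_conj_diagonal]
  exact sum_mul_le_sum_range_of_monotoneOn e hlam (diag_transpose_mul_self_nonneg _)
    (diag_transpose_mul_self_le_one hM) (sum_diag_transpose_mul_self hM)

omit [Fintype κ] [DecidableEq κ] in
/-- The smallest eigenvalue is at most the Rayleigh quotient of the normalized all-ones
vector. -/
theorem apply_zero_nonpos_of_sum_eq_zero (hN : 0 < N)
    (hsum : ∑ p, ∑ q, (U * diagonal (fun p => lam (e p)) * Uᵀ) p q = 0) : lam 0 ≤ 0 := by
  set V : Matrix (Fin 1) ι ℝ := of fun _ _ => (√N)⁻¹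
  have hcard : (Fintype.card ι : ℝ) = N := by simp [Fintype.card_congr e]
  have hV : V * Vᵀ = 1 := by
    ext i j
    obtain rfl := Subsingleton.elim i j
    have hN' : (0 : ℝ) < N := by exact_mod_cast hN
    simp [V, mul_apply, hcard, ← sq, Real.sq_sqrt hN'.le, hN'.ne']
  have h := sum_range_le_trace_conj e hlam hU hV
  generalize U * diagonal (fun p => lam (e p)) * Uᵀ = A at h hsum
  rw [Finset.sum_comm (f := fun p q => A p q)] at hsum
  simpa [V, trace, mul_apply, ← mul_sum, ← sum_mul, hsum] using h

end KyFan

theorem apply_nonneg_of_posSemidef [Fintype ι] [DecidableEq ι] {N : ℕ} (e : ι ≃ Fin N)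
    {lam : ℕ → ℝ} {U : Matrix ι ι ℝ} (hU : U * Uᵀ = 1)
    (h : (U * diagonal (fun p => lam (e p)) * Uᵀ).PosSemidef) {i : ℕ} (hi : i < N) :
    0 ≤ lam i := by
  have hU' : Uᵀ * U = 1 := mul_eq_one_comm.mp hU
  have hd := h.conjTranspose_mul_mul_same U
  rw [conjTranspose_eq_transpose_of_trivial, Matrix.mul_assoc, Matrix.mul_assoc, hU',
    Matrix.mul_one, ← Matrix.mul_assoc, hU', Matrix.one_mul] at hd
  simpa using posSemidef_diagonal_iff.mp hd (e.symm ⟨i, hi⟩)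

variable {R : Type*}

def partialTrace [Fintype ι] [AddCommMonoid R] (L : Matrix (ν × ι) (ν × ι) R) : Matrix ν ν R :=
  of fun u v => ∑ a, L (u, a) (v, a)

theorem trace_kronecker_one_mul [Fintype ν] [Fintype ι] [DecidableEq ι] [CommSemiring R]
    (B : Matrix ν ν R) (L : Matrix (ν × ι) (ν × ι) R) :
    trace ((B ⊗ₖ (1 : Matrix ι ι R)) * L) = trace (B * partialTrace L) := by
  simp only [trace, diag, mul_apply, kroneckerMap_apply, one_apply, Fintype.sum_prod_type,
    partialTrace, of_apply, mul_ite, mul_one, mul_zero, ite_mul, zero_mul, sum_ite_eq,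
    mem_univ, if_true, mul_sum]
  exact Finset.sum_congr rfl fun u _ => Finset.sum_comm

theorem trace_kronecker_one_conj [Fintype ν] [Fintype ι] [DecidableEq ι] [Fintype κ]
    [CommSemiring R] (A : Matrix κ ν R) (L : Matrix (ν × ι) (ν × ι) R) :
    trace ((A ⊗ₖ (1 : Matrix ι ι R)) * L * (A ⊗ₖ (1 : Matrix ι ι R))ᵀ)
      = trace (A * partialTrace L * Aᵀ) := by
  rw [trace_mul_cycle, ← kroneckerMap_transpose, transpose_one, ← mul_kronecker_mul,
    Matrix.one_mul, trace_kronecker_one_mul, trace_mul_cycle A]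

theorem kronecker_one_mul_transpose_eq_one [Fintype ν] [Fintype ι] [DecidableEq ι]
    [DecidableEq κ] [CommSemiring R] {A : Matrix κ ν R} (hA : A * Aᵀ = 1) :
    (A ⊗ₖ (1 : Matrix ι ι R)) * (A ⊗ₖ (1 : Matrix ι ι R))ᵀ = 1 := by
  rw [← kroneckerMap_transpose, transpose_one, ← mul_kronecker_mul, hA, Matrix.mul_one,
    one_kronecker_one]

theorem submatrix_transpose_mul_transpose_eq_one [Fintype ν] [DecidableEq ν] [DecidableEq κ]
    [CommRing R] {U : Matrix ν ν R} (hU : U * Uᵀ = 1) {f : κ → ν}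
    (hf : Function.Injective f) : Uᵀ.submatrix f id * (Uᵀ.submatrix f id)ᵀ = 1 := by
  change (Uᵀ * U).submatrix f f = 1
  rw [mul_eq_one_comm.mp hU, submatrix_one f hf]

theorem trace_submatrix_transpose_conj_diagonal [Fintype ν] [DecidableEq ν] [Fintype κ]
    [CommRing R] {U : Matrix ν ν R} (hU : U * Uᵀ = 1) (f : κ → ν) (d : ν → R) :
    trace (Uᵀ.submatrix f id * (U * diagonal d * Uᵀ) * (Uᵀ.submatrix f id)ᵀ)
      = ∑ j, d (f j) := by
  have hU' : Uᵀ * U = 1 := mul_eq_one_comm.mp hU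
  change trace ((Uᵀ * (U * diagonal d * Uᵀ) * U).submatrix f f) = _
  rw [Matrix.mul_assoc, Matrix.mul_assoc, hU', Matrix.mul_one, ← Matrix.mul_assoc, hU',
    Matrix.one_mul]
  simp [trace]

section PartialTrace

variable [Fintype ν] [DecidableEq ν] [Fintype ι] [DecidableEq ι] [Fintype κ]
  [DecidableEq κ] {N : ℕ} (e : ν × ι ≃ Fin N) {lam : ℕ → ℝ}
  (hlam : MonotoneOn lam (Set.Iio N)) {U : Matrix (ν × ι) (ν × ι) ℝ} (hU : U * Uᵀ = 1)
  {L : Matrix (ν × ι) (ν × ι) ℝ} (hL : L = U * diagonal (fun p => lam (e p)) * Uᵀ)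
  {Ut : Matrix ν ν ℝ} (hUt : Ut * Utᵀ = 1) {d : ν → ℝ}
  (hLt : partialTrace L = Ut * diagonal d * Utᵀ) {f : κ → ν} (hf : Function.Injective f)
include hlam hU hL hUt hLt hf

/-- Eigenvectors `x_j` of the partial trace of `L` lift to the orthonormal family `x_j ⊗ e_a`,
on which `L` has total Rayleigh quotient `∑ j, d (f j)`. -/
theorem sum_range_le_sum_comp_of_partialTrace_eq :
    ∑ i ∈ range (Fintype.card κ * Fintype.card ι), lam i ≤ ∑ j, d (f j) := by
  have hV := kronecker_one_mul_transpose_eq_one (ι := ι)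
    (submatrix_transpose_mul_transpose_eq_one hUt hf)
  have h := sum_range_le_trace_conj e hlam hU hV
  rwa [← hL, trace_kronecker_one_conj, hLt, trace_submatrix_transpose_conj_diagonal hUt,
    Fintype.card_prod] at h

theorem sum_comp_le_sum_range_of_partialTrace_eq :
    ∑ j, d (f j) ≤ ∑ i ∈ range (Fintype.card κ * Fintype.card ι),
      lam (N - Fintype.card κ * Fintype.card ι + i) := by
  have hV := kronecker_one_mul_transpose_eq_one (ι := ι)
    (submatrix_transpose_mul_transpose_eq_one hUt hf)
  have h := trace_conj_le_sum_range e hlam hU hV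
  rwa [← hL, trace_kronecker_one_conj, hLt, trace_submatrix_transpose_conj_diagonal hUt,
    Fintype.card_prod] at h

end PartialTrace

end Matrix

section MatrixWeightedGraph

variable {n k : ℕ} {W : Fin n → Fin n → Matrix (Fin k) (Fin k) ℝ}

theorem partialTrace_mwLap (hW : ∀ v, W v v = 0) :
    partialTrace (mwLap n k W) = trLap n k W := by
  ext u v
  by_cases h : u = v
  · subst h
    simp [partialTrace, mwLap, mwDeg, mwAdj, trLap, hW, trace, Matrix.sum_apply]
    exact Finset.sum_comm
  · simp [partialTrace, mwLap, mwDeg, mwAdj, trLap, h, trace]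

theorem sum_trLap_row_eq_zero (hsym : ∀ u v, W u v = W v u) (hW : ∀ v, W v v = 0) (u : Fin n) :
    ∑ v, trLap n k W u v = 0 := by
  have hentry : ∀ v, trLap n k W u v
      = (if u = v then ∑ w, (W w v).trace else 0) - (W u v).trace := by
    intro v
    by_cases h : u = v
    · subst h; simp [trLap, hW]
    · simp [trLap, h]
  simp only [hentry, sum_sub_distrib, sum_ite_eq, mem_univ, if_true, hsym u, sub_self]

theorem two_smul_mwLap (hsym : ∀ u v, W u v = W v u) :
    (2 : ℝ) • mwLap n k W = ∑ u, ∑ v,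
      vecMulVec (Pi.single u 1 - Pi.single v 1) (Pi.single u 1 - Pi.single v 1) ⊗ₖ W u v := by
  ext ⟨a, i⟩ ⟨c, j⟩
  simp [mwLap, mwDeg, mwAdj, Matrix.sum_apply, vecMulVec_apply, Pi.single_apply, sub_mul,
    mul_sub, sum_sub_distrib, ite_mul, mul_ite]
  by_cases h : a = c
  · subst h
    have hrow : ∑ x, W a x i j = ∑ x, W x a i j := sum_congr rfl fun x _ => by rw [hsym]
    simp only [if_true]
    rw [hrow]
    ring
  · simp only [h, if_false]
    rw [hsym c a]
    ring

theorem posSemidef_mwLap (hpsd : ∀ u v, (W u v).PosSemidef) (hsym : ∀ u v, W u v = W v u) :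
    (mwLap n k W).PosSemidef := by
  have h : mwLap n k W = (2⁻¹ : ℝ) • ((2 : ℝ) • mwLap n k W) := by
    rw [smul_smul, inv_mul_cancel₀ two_ne_zero, one_smul]
  rw [h, two_smul_mwLap hsym]
  refine .smul (posSemidef_sum _ fun u _ => posSemidef_sum _ fun v _ => ?_) (by norm_num)
  have hb := posSemidef_vecMulVec_self_star (Pi.single u 1 - Pi.single v 1 : Fin n → ℝ)
  rw [star_trivial] at hb
  exact hb.kronecker (hpsd u v)

end MatrixWeightedGraph

/-- Trace bound relating the Laplacian spectra of a matrix-weighted graph `(G, W)`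
and its trace graph `(G, tr W)`:
`∑_{i=1}^k λ_{k+i}(L_W) ≤ λ_2(L_{tr W}) ≤ λ_n(L_{tr W}) ≤ ∑_{i=1}^k λ_{(n-1)k+i}(L_W)`.
Here `lam` (resp. `nu`) enumerates the eigenvalues of `L_W` (resp. `L_{tr W}`) in
increasing order with multiplicity (0-indexed), as witnessed by an orthogonal
spectral decomposition. -/
theorem matrix_weighted_laplacian_trace_bound
    (n k : ℕ) (hn : 2 ≤ n) (G : SimpleGraph (Fin n))
    (W : Fin n → Fin n → Matrix (Fin k) (Fin k) ℝ)
    (hpsd : ∀ u v, (W u v).PosSemidef)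
    (hsym : ∀ u v, W u v = W v u)
    (h0 : ∀ u v, ¬ G.Adj u v → W u v = 0)
    (lam : ℕ → ℝ) (hlam : MonotoneOn lam (Set.Iio (n * k)))
    (U : Matrix (Fin n × Fin k) (Fin n × Fin k) ℝ) (hU : U * Uᵀ = 1)
    (hLW : mwLap n k W =
      U * Matrix.diagonal (fun p => lam (finProdFinEquiv p)) * Uᵀ)
    (nu : ℕ → ℝ) (hnu : MonotoneOn nu (Set.Iio n))
    (Ut : Matrix (Fin n) (Fin n) ℝ) (hUt : Ut * Utᵀ = 1)
    (hLtr : trLap n k W = Ut * Matrix.diagonal (fun v : Fin n => nu v) * Utᵀ) :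
    (∑ i ∈ Finset.range k, lam (k + i)) ≤ nu 1 ∧
      nu 1 ≤ nu (n - 1) ∧
      nu (n - 1) ≤ ∑ i ∈ Finset.range k, lam ((n - 1) * k + i) := by
  have hW : ∀ v, W v v = 0 := fun v => h0 v v G.irrefl
  have hPT := (partialTrace_mwLap hW).trans hLtr
  have hlow := sum_range_le_sum_comp_of_partialTrace_eq finProdFinEquiv hlam hU hLW hUt hPT
    (Fin.castLE_injective hn)
  have hup := sum_comp_le_sum_range_of_partialTrace_eq finProdFinEquiv hlam hU hLW hUt hPT
    (f := fun _ : Fin 1 => ⟨n - 1, by omega⟩) (Function.injective_of_subsingleton _)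
  have hlam0 : 0 ≤ ∑ i ∈ range k, lam i := sum_nonneg fun i hi =>
    apply_nonneg_of_posSemidef finProdFinEquiv hU (hLW ▸ posSemidef_mwLap hpsd hsym)
      (by rw [mem_range] at hi; nlinarith)
  have htotal : ∑ u, ∑ v, trLap n k W u v = 0 := by simp [sum_trLap_row_eq_zero hsym hW]
  have hnu0 : nu 0 ≤ 0 :=
    apply_zero_nonpos_of_sum_eq_zero (Equiv.refl (Fin n)) hnu hUt (by omega) (hLtr ▸ htotal)
  simp only [Fintype.card_fin, Fin.sum_univ_two, Fin.val_castLE, Fin.val_zero, Fin.val_one,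
    Fin.sum_univ_one, one_mul] at hlow hup
  rw [two_mul, sum_range_add] at hlow
  rw [Nat.sub_one_mul]
  exact ⟨by linarith, hnu (by simp; omega) (by simp; omega) (by omega), hup⟩
end
end

section
/- Let (G,W) be a matrix-weighted graph with n vertices and k×k weights, with Laplacian L_W having eigenvalues λ_1(L_W) ≤ … ≤ λ_{nk}(L_W), and let L_{tr W} be the Laplacian of the scalar-weighted graph (G, tr W), with eigenvalues λ_1(L_{tr W}) ≤ … ≤ λ_n(L_{tr W}). Then λ_{k+1}(L_W) ≤ (1/k)·λ_2(L_{tr W}) and λ_{nk}(L_W) ≥ (1/k)·λ_n(L_{tr W}). -/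
/-!
Writing `y ⊗ e_j` for `blockVec y j`, the `L_W`-quadratic forms of `y ⊗ e_1, …, y ⊗ e_k` add up
to the `L_{tr W}`-quadratic form of `y`, and every vector `c ∘ Prod.snd` (the same `c` at every
vertex) lies in the kernel of `L_W`.

For `λ_{k+1}`: pick `y ⊥ 1` with Rayleigh quotient at most `λ_2(L_{tr W})` (Courant–Fischer in the
span of the first two eigenvectors). Some `y ⊗ e_j` then has `L_W`-Rayleigh quotient at most
`λ_2(L_{tr W}) / k`; it is orthogonal to the `k`-dimensional kernel above, and Courant–Fischer on
the `(k+1)`-dimensional space they span bounds `λ_{k+1}(L_W)`.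

For `λ_{nk}`: the quadratic form of a top eigenvector `u` of `L_{tr W}` is the sum of the `k`
quadratic forms of the unit vectors `u ⊗ e_j`, each at most `λ_{nk}(L_W)`.
-/

open Matrix Finset

noncomputable section

section Spectral

variable {ι : Type*} [Fintype ι]

theorem dotProduct_self_nonneg (v : ι → ℝ) : 0 ≤ v ⬝ᵥ v :=
  Fintype.sum_nonneg fun i => mul_self_nonneg (v i)

theorem dotProduct_self_pos {v : ι → ℝ} (hv : v ≠ 0) : 0 < v ⬝ᵥ v :=
  (dotProduct_self_nonneg v).lt_of_ne (Ne.symm (dotProduct_self_eq_zero.not.mpr hv))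

theorem exists_mem_ne_zero_forall_dotProduct_eq_zero {σ : Type*} [Fintype σ]
    (V : Submodule ℝ (ι → ℝ)) (C : σ → ι → ℝ) (h : Fintype.card σ < Module.finrank ℝ V) :
    ∃ x ∈ V, x ≠ 0 ∧ ∀ s, C s ⬝ᵥ x = 0 := by
  have hker := LinearMap.ker_ne_bot_of_finrank_lt (f := (of C).mulVecLin ∘ₗ V.subtype)
    (by rwa [Module.finrank_fintype_fun_eq_card])
  obtain ⟨⟨x, hxV⟩, hx, hx0⟩ := (Submodule.ne_bot_iff _).mp hker
  exact ⟨x, hxV, fun h => hx0 (by simp [h]), fun s => congrFun hx s⟩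

variable [DecidableEq ι] {U : Matrix ι ι ℝ}

theorem dotProduct_mulVec_spectral (f x : ι → ℝ) :
    x ⬝ᵥ ((U * diagonal f * Uᵀ) *ᵥ x) = ∑ p, f p * (Uᵀ *ᵥ x) p ^ 2 := by
  rw [← mulVec_mulVec, ← mulVec_mulVec, dotProduct_mulVec, ← mulVec_transpose]
  simp only [mulVec_diagonal, dotProduct]
  exact Finset.sum_congr rfl fun p _ => by ring

theorem dotProduct_self_eq_sum_sq (hU : U * Uᵀ = 1) (x : ι → ℝ) :
    x ⬝ᵥ x = ∑ p, (Uᵀ *ᵥ x) p ^ 2 := by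
  simpa [hU] using dotProduct_mulVec_spectral (U := U) 1 x

theorem quadForm_le_of_forall (hU : U * Uᵀ = 1) {f : ι → ℝ} {c : ℝ} {x : ι → ℝ}
    (h : ∀ p, (Uᵀ *ᵥ x) p ≠ 0 → f p ≤ c) :
    x ⬝ᵥ ((U * diagonal f * Uᵀ) *ᵥ x) ≤ c * (x ⬝ᵥ x) := by
  rw [dotProduct_mulVec_spectral, dotProduct_self_eq_sum_sq hU, Finset.mul_sum]
  refine Finset.sum_le_sum fun p _ => ?_
  by_cases hp : (Uᵀ *ᵥ x) p = 0
  · simp [hp]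
  · exact mul_le_mul_of_nonneg_right (h p hp) (sq_nonneg _)

theorem le_quadForm_of_forall (hU : U * Uᵀ = 1) {f : ι → ℝ} {c : ℝ} {x : ι → ℝ}
    (h : ∀ p, (Uᵀ *ᵥ x) p ≠ 0 → c ≤ f p) :
    c * (x ⬝ᵥ x) ≤ x ⬝ᵥ ((U * diagonal f * Uᵀ) *ᵥ x) := by
  rw [dotProduct_mulVec_spectral, dotProduct_self_eq_sum_sq hU, Finset.mul_sum]
  refine Finset.sum_le_sum fun p _ => ?_
  by_cases hp : (Uᵀ *ᵥ x) p = 0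
  · simp [hp]
  · exact mul_le_mul_of_nonneg_right (h p hp) (sq_nonneg _)

theorem quadForm_mulVec_single (hU : U * Uᵀ = 1) (f : ι → ℝ) (r : ι) :
    (U *ᵥ Pi.single r 1) ⬝ᵥ ((U * diagonal f * Uᵀ) *ᵥ (U *ᵥ Pi.single r 1)) = f r := by
  rw [dotProduct_mulVec_spectral, mulVec_mulVec, mul_eq_one_comm.mp hU, one_mulVec]
  simp [Pi.single_apply]

theorem dotProduct_self_mulVec_single (hU : U * Uᵀ = 1) (r : ι) :
    (U *ᵥ Pi.single r 1) ⬝ᵥ (U *ᵥ Pi.single r 1) = 1 := by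
  simpa [hU] using quadForm_mulVec_single hU 1 r

variable {N : ℕ} (e : ι ≃ Fin N) {lam : ℕ → ℝ}

theorem exists_mem_ne_zero_le_quadForm (hU : U * Uᵀ = 1) (hlam : MonotoneOn lam (Set.Iio N))
    {k : ℕ} (hk : k < N) (V : Submodule ℝ (ι → ℝ)) (hV : k < Module.finrank ℝ V) :
    ∃ x ∈ V, x ≠ 0 ∧
      lam k * (x ⬝ᵥ x) ≤ x ⬝ᵥ ((U * diagonal (fun p => lam (e p)) * Uᵀ) *ᵥ x) := by
  obtain ⟨x, hxV, hx0, hx⟩ := exists_mem_ne_zero_forall_dotProduct_eq_zero V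
    (fun i : Fin k => Uᵀ (e.symm ⟨i, i.2.trans hk⟩)) (by rwa [Fintype.card_fin])
  refine ⟨x, hxV, hx0, le_quadForm_of_forall hU fun p hp => ?_⟩
  have hkp : k ≤ e p := by
    by_contra! hpk
    have := hx ⟨e p, hpk⟩
    simp only [Fin.eta, Equiv.symm_apply_apply] at this
    exact hp this
  exact hlam hk (e p).2 hkp

theorem exists_ne_zero_dotProduct_eq_zero_quadForm_le (hU : U * Uᵀ = 1)
    (hlam : MonotoneOn lam (Set.Iio N)) (hN : 1 < N) (c : ι → ℝ) :
    ∃ y ≠ 0, c ⬝ᵥ y = 0 ∧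
      y ⬝ᵥ ((U * diagonal (fun p => lam (e p)) * Uᵀ) *ᵥ y) ≤ lam 1 * (y ⬝ᵥ y) := by
  obtain ⟨y, -, hy0, hy⟩ := exists_mem_ne_zero_forall_dotProduct_eq_zero ⊤
    (fun s : Option (Fin (N - 2)) => s.elim c fun i => Uᵀ (e.symm ⟨i + 2, by omega⟩))
    (by rw [finrank_top, Module.finrank_fintype_fun_eq_card, Fintype.card_option,
      Fintype.card_fin, Fintype.card_congr e, Fintype.card_fin]; omega)
  refine ⟨y, hy0, hy none, quadForm_le_of_forall hU fun p hp => ?_⟩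
  have hp2 : (e p : ℕ) ≤ 1 := by
    by_contra! h2
    have := hy (some ⟨e p - 2, by omega⟩)
    simp only [Option.elim_some, Nat.sub_add_cancel h2, Fin.eta, Equiv.symm_apply_apply] at this
    exact hp this
  exact hlam (e p).2 (Set.mem_Iio.mpr hN) hp2

theorem le_of_forall_mem_ker_quadForm_le (hU : U * Uᵀ = 1) (hlam : MonotoneOn lam (Set.Iio N))
    {k : ℕ} (hk : k < N) (K : Submodule ℝ (ι → ℝ)) (hK : k ≤ Module.finrank ℝ K)
    (hKM : ∀ g ∈ K, (U * diagonal (fun p => lam (e p)) * Uᵀ) *ᵥ g = 0)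
    {z : ι → ℝ} (hz0 : z ≠ 0) (hzK : ∀ g ∈ K, g ⬝ᵥ z = 0) {c : ℝ} (hc : 0 ≤ c)
    (hzc : z ⬝ᵥ ((U * diagonal (fun p => lam (e p)) * Uᵀ) *ᵥ z) ≤ c * (z ⬝ᵥ z)) :
    lam k ≤ c := by
  set M := U * diagonal (fun p => lam (e p)) * Uᵀ
  have hzz : 0 < z ⬝ᵥ z := dotProduct_self_pos hz0
  set φ := K.subtype.coprod (LinearMap.toSpanSingleton ℝ (ι → ℝ) z)
  have hφ : Function.Injective φ := by
    rw [← LinearMap.ker_eq_bot, LinearMap.ker_eq_bot']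
    rintro ⟨g, b⟩ h
    have hgz : (g : ι → ℝ) = -(b • z) := eq_neg_of_add_eq_zero_left h
    have hb : b = 0 := by
      have := hzK g g.2
      rw [hgz, neg_dotProduct, smul_dotProduct, smul_eq_mul, neg_eq_zero] at this
      exact (mul_eq_zero.mp this).resolve_right hzz.ne'
    simp_all
  obtain ⟨x, ⟨⟨g, b⟩, rfl⟩, hx0, hlow⟩ := exists_mem_ne_zero_le_quadForm e hU hlam hk
    (LinearMap.range φ) (by
      rw [LinearMap.finrank_range_of_inj hφ, Module.finrank_prod, Module.finrank_self]; omega)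
  have hMsymm : Mᵀ = M := by simp [M, Matrix.transpose_mul, Matrix.mul_assoc]
  have hMx : M *ᵥ φ (g, b) = b • (M *ᵥ z) := by
    simp [φ, mulVec_add, mulVec_smul, hKM g g.2]
  have hgMz : (g : ι → ℝ) ⬝ᵥ (M *ᵥ z) = 0 := by
    rw [dotProduct_mulVec, ← mulVec_transpose, hMsymm, hKM g g.2, zero_dotProduct]
  have hquad : φ (g, b) ⬝ᵥ (M *ᵥ φ (g, b)) = b ^ 2 * (z ⬝ᵥ (M *ᵥ z)) := by
    rw [hMx]
    simp only [φ, LinearMap.coprod_apply, Submodule.subtype_apply,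
      LinearMap.toSpanSingleton_apply, add_dotProduct, dotProduct_smul, smul_dotProduct, hgMz,
      smul_eq_mul]
    ring
  have hnorm : b ^ 2 * (z ⬝ᵥ z) ≤ φ (g, b) ⬝ᵥ φ (g, b) := by
    have hg := hzK g g.2
    simp only [φ, LinearMap.coprod_apply, Submodule.subtype_apply,
      LinearMap.toSpanSingleton_apply, add_dotProduct, dotProduct_add, smul_dotProduct,
      dotProduct_smul, dotProduct_comm z, hg, smul_eq_mul]
    nlinarith [dotProduct_self_nonneg (g : ι → ℝ)]
  have hxx : 0 < φ (g, b) ⬝ᵥ φ (g, b) := dotProduct_self_pos hx0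
  have : lam k * (φ (g, b) ⬝ᵥ φ (g, b)) ≤ c * (φ (g, b) ⬝ᵥ φ (g, b)) := by
    calc _ ≤ b ^ 2 * (z ⬝ᵥ (M *ᵥ z)) := hquad ▸ hlow
      _ ≤ b ^ 2 * (c * (z ⬝ᵥ z)) := mul_le_mul_of_nonneg_left hzc (sq_nonneg b)
      _ = c * (b ^ 2 * (z ⬝ᵥ z)) := by ring
      _ ≤ _ := mul_le_mul_of_nonneg_left hnorm hc
  exact le_of_mul_le_mul_right this hxx

end Spectral

section MatrixWeighted

variable {n k : ℕ} (W : Fin n → Fin n → Matrix (Fin k) (Fin k) ℝ)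

def blockVec {α β : Type*} [DecidableEq β] (y : α → ℝ) (j : β) : α × β → ℝ :=
  fun q => if q.2 = j then y q.1 else 0

theorem blockVec_dotProduct {α β : Type*} [Fintype α] [Fintype β] [DecidableEq β]
    (y : α → ℝ) (j : β) (w : α × β → ℝ) : blockVec y j ⬝ᵥ w = ∑ v, y v * w (v, j) := by
  simp [blockVec, dotProduct, Fintype.sum_prod_type, ite_mul]

theorem mulVec_blockVec {α β : Type*} [Fintype α] [Fintype β] [DecidableEq β]
    (M : Matrix (α × β) (α × β) ℝ) (y : α → ℝ) (j : β) (p : α × β) :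
    (M *ᵥ blockVec y j) p = ∑ u, M p (u, j) * y u := by
  simp [blockVec, mulVec, dotProduct, Fintype.sum_prod_type, mul_ite]

theorem blockVec_dotProduct_self {α β : Type*} [Fintype α] [Fintype β] [DecidableEq β]
    (y : α → ℝ) (j : β) : blockVec y j ⬝ᵥ blockVec y j = y ⬝ᵥ y := by
  rw [blockVec_dotProduct]
  simp [blockVec, dotProduct]

theorem comp_snd_dotProduct_blockVec {α β : Type*} [Fintype α] [Fintype β] [DecidableEq β]
    (c : β → ℝ) (y : α → ℝ) (j : β) : (c ∘ Prod.snd) ⬝ᵥ blockVec y j = c j * (1 ⬝ᵥ y) := by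
  rw [dotProduct_comm, blockVec_dotProduct]
  simp [dotProduct, Finset.mul_sum, mul_comm]

theorem mwLap_mulVec_comp_snd (hsym : ∀ u v, W u v = W v u) (c : Fin k → ℝ) :
    mwLap n k W *ᵥ (c ∘ Prod.snd) = 0 := by
  funext p
  simp only [mwLap, sub_mulVec, Pi.sub_apply, Pi.zero_apply, sub_eq_zero]
  simp only [mwDeg, mwAdj, mulVec, dotProduct, Fintype.sum_prod_type, ite_mul, zero_mul,
    Matrix.sum_apply, Finset.sum_mul, Function.comp_apply]
  rw [Finset.sum_comm]
  simp only [Finset.sum_ite_eq, Finset.mem_univ, if_true]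
  rw [Finset.sum_comm]
  exact Finset.sum_congr rfl fun u _ => by rw [hsym]

theorem trLap_apply_eq_sum_mwLap (hdiag : ∀ v, W v v = 0) (v u : Fin n) :
    trLap n k W v u = ∑ j, mwLap n k W (v, j) (u, j) := by
  by_cases h : v = u
  · subst h
    simp [trLap, mwLap, mwDeg, mwAdj, hdiag, Matrix.trace, Matrix.sum_apply,
      Finset.sum_comm (γ := Fin k)]
  · simp [trLap, mwLap, mwDeg, mwAdj, h, Matrix.trace]

theorem sum_blockVec_quadForm_mwLap (hdiag : ∀ v, W v v = 0) (y : Fin n → ℝ) :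
    ∑ j, blockVec y j ⬝ᵥ (mwLap n k W *ᵥ blockVec y j) = y ⬝ᵥ (trLap n k W *ᵥ y) := by
  simp only [blockVec_dotProduct, mulVec_blockVec]
  simp only [trLap_apply_eq_sum_mwLap W hdiag, dotProduct, mulVec, Finset.mul_sum, Finset.sum_mul]
  rw [Finset.sum_comm]
  refine Finset.sum_congr rfl fun v _ => ?_
  rw [Finset.sum_comm]

theorem trLap_mulVec_apply (hsym : ∀ u v, W u v = W v u) (hdiag : ∀ v, W v v = 0)
    (y : Fin n → ℝ) (u : Fin n) :
    (trLap n k W *ᵥ y) u = ∑ v, (W u v).trace * (y u - y v) := by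
  have hentry : ∀ v,
      trLap n k W u v = (if u = v then ∑ w, (W w v).trace else 0) - (W u v).trace := by
    intro v
    by_cases h : u = v
    · subst h; simp [trLap, hdiag]
    · simp [trLap, h]
  simp only [mulVec, dotProduct, hentry, sub_mul, Finset.sum_sub_distrib, ite_mul, zero_mul,
    Finset.sum_ite_eq, Finset.mem_univ, if_true, mul_sub, Finset.sum_mul]
  simp_rw [hsym _ u]

theorem two_mul_quadForm_trLap (hsym : ∀ u v, W u v = W v u) (hdiag : ∀ v, W v v = 0)
    (y : Fin n → ℝ) :
    2 * (y ⬝ᵥ (trLap n k W *ᵥ y)) = ∑ u, ∑ v, (W u v).trace * (y u - y v) ^ 2 := by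
  have hswap : ∑ u, ∑ v, (W u v).trace * (y u * (y u - y v))
      = ∑ u, ∑ v, (W u v).trace * (y v * (y v - y u)) := by
    rw [Finset.sum_comm]
    simp_rw [hsym]
  have hquad : y ⬝ᵥ (trLap n k W *ᵥ y) = ∑ u, ∑ v, (W u v).trace * (y u * (y u - y v)) := by
    simp only [dotProduct, trLap_mulVec_apply W hsym hdiag, Finset.mul_sum]
    exact Finset.sum_congr rfl fun u _ => Finset.sum_congr rfl fun v _ => by ring
  rw [two_mul, hquad]
  nth_rewrite 2 [hswap]
  simp only [← Finset.sum_add_distrib]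
  exact Finset.sum_congr rfl fun u _ => Finset.sum_congr rfl fun v _ => by ring

theorem quadForm_trLap_nonneg (hpsd : ∀ u v, (W u v).PosSemidef) (hsym : ∀ u v, W u v = W v u)
    (hdiag : ∀ v, W v v = 0) (y : Fin n → ℝ) : 0 ≤ y ⬝ᵥ (trLap n k W *ᵥ y) := by
  have hsum : 0 ≤ ∑ u, ∑ v, (W u v).trace * (y u - y v) ^ 2 :=
    Finset.sum_nonneg fun u _ => Finset.sum_nonneg fun v _ =>
      mul_nonneg (hpsd u v).trace_nonneg (sq_nonneg _)
  linarith [two_mul_quadForm_trLap W hsym hdiag y]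

theorem quadForm_trLap_le (hdiag : ∀ v, W v v = 0) {c : ℝ}
    (hc : ∀ x, x ⬝ᵥ (mwLap n k W *ᵥ x) ≤ c * (x ⬝ᵥ x)) (y : Fin n → ℝ) :
    y ⬝ᵥ (trLap n k W *ᵥ y) ≤ k * c * (y ⬝ᵥ y) := by
  rw [← sum_blockVec_quadForm_mwLap W hdiag]
  calc _ ≤ ∑ _j : Fin k, c * (y ⬝ᵥ y) :=
        Finset.sum_le_sum fun j _ => blockVec_dotProduct_self y j ▸ hc _
    _ = _ := by simp [mul_assoc]

theorem le_div_of_quadForm_trLap_le (hk : k < n * k) (hsym : ∀ u v, W u v = W v u)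
    (hdiag : ∀ v, W v v = 0) {lam : ℕ → ℝ} (hlam : MonotoneOn lam (Set.Iio (n * k)))
    {U : Matrix (Fin n × Fin k) (Fin n × Fin k) ℝ} (hU : U * Uᵀ = 1)
    (hLW : mwLap n k W = U * diagonal (fun p => lam (finProdFinEquiv p)) * Uᵀ)
    {y : Fin n → ℝ} (hy0 : y ≠ 0) (hy1 : 1 ⬝ᵥ y = 0) {c : ℝ} (hc : 0 ≤ c)
    (hyc : y ⬝ᵥ (trLap n k W *ᵥ y) ≤ c * (y ⬝ᵥ y)) :
    lam k ≤ c / k := by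
  have hk0 : 0 < k := Nat.pos_of_ne_zero (by rintro rfl; simp at hk)
  have : Nonempty (Fin k) := ⟨⟨0, hk0⟩⟩
  have : Nonempty (Fin n) := ⟨⟨0, Nat.pos_of_mul_pos_right (k.zero_le.trans_lt hk)⟩⟩
  replace hk0 : (0 : ℝ) < k := Nat.cast_pos.mpr hk0
  obtain ⟨j, -, hj⟩ := Finset.exists_le_of_sum_le Finset.univ_nonempty
    (f := fun j => blockVec y j ⬝ᵥ (mwLap n k W *ᵥ blockVec y j))
    (g := fun j => c / k * (blockVec y j ⬝ᵥ blockVec y j)) (by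
      simp only [sum_blockVec_quadForm_mwLap W hdiag, blockVec_dotProduct_self,
        Finset.sum_const, Finset.card_univ, Fintype.card_fin, nsmul_eq_mul]
      rwa [← mul_assoc, mul_div_cancel₀ _ hk0.ne'])
  rw [hLW] at hj
  refine le_of_forall_mem_ker_quadForm_le finProdFinEquiv hU hlam hk
    (LinearMap.range (LinearMap.funLeft ℝ ℝ Prod.snd)) ?_ ?_ ?_ ?_ (div_nonneg hc hk0.le) hj
  · rw [LinearMap.finrank_range_of_inj
      (LinearMap.funLeft_injective_of_surjective _ _ _ Prod.snd_surjective),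
      Module.finrank_fin_fun]
  · rintro _ ⟨g, rfl⟩
    rw [← hLW]
    exact mwLap_mulVec_comp_snd W hsym g
  · intro h
    apply hy0
    rw [← dotProduct_self_eq_zero, ← blockVec_dotProduct_self y j, h, zero_dotProduct]
  · rintro _ ⟨g, rfl⟩
    exact (comp_snd_dotProduct_blockVec g y j).trans (by rw [hy1, mul_zero])

end MatrixWeighted

/-- Eigenvalues are indexed from `0`: `lam k` is `λ_{k+1}(L_W)` and `nu 1` is `λ_2(L_{tr W})`. -/
theorem matrix_weighted_laplacian_trace_bound_corollary
    (n k : ℕ) (hn : 2 ≤ n) (hk : 0 < k) (G : SimpleGraph (Fin n))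
    (W : Fin n → Fin n → Matrix (Fin k) (Fin k) ℝ)
    (hpsd : ∀ u v, (W u v).PosSemidef)
    (hsym : ∀ u v, W u v = W v u)
    (h0 : ∀ u v, ¬ G.Adj u v → W u v = 0)
    (lam : ℕ → ℝ) (hlam : MonotoneOn lam (Set.Iio (n * k)))
    (U : Matrix (Fin n × Fin k) (Fin n × Fin k) ℝ) (hU : U * Uᵀ = 1)
    (hLW : mwLap n k W =
      U * Matrix.diagonal (fun p => lam (finProdFinEquiv p)) * Uᵀ)
    (nu : ℕ → ℝ) (hnu : MonotoneOn nu (Set.Iio n))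
    (Ut : Matrix (Fin n) (Fin n) ℝ) (hUt : Ut * Utᵀ = 1)
    (hLtr : trLap n k W = Ut * Matrix.diagonal (fun v : Fin n => nu v) * Utᵀ) :
    lam k ≤ (1 / (k : ℝ)) * nu 1 ∧ (1 / (k : ℝ)) * nu (n - 1) ≤ lam (n * k - 1) := by
  have hdiag : ∀ v, W v v = 0 := fun v => h0 v v G.irrefl
  have hnk : k < n * k := by nlinarith
  rw [one_div_mul_eq_div, one_div_mul_eq_div]
  constructor
  · obtain ⟨y, hy0, hy1, hyL⟩ :=
      exists_ne_zero_dotProduct_eq_zero_quadForm_le (Equiv.refl (Fin n)) hUt hnu hn 1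
    have hnu1 := quadForm_mulVec_single hUt (fun v : Fin n => nu v) ⟨1, hn⟩
    simp only [Equiv.refl_apply] at hyL
    rw [← hLtr] at hnu1 hyL
    exact le_div_of_quadForm_trLap_le W hnk hsym hdiag hlam hU hLW hy0 hy1
      (hnu1 ▸ quadForm_trLap_nonneg W hpsd hsym hdiag _) hyL
  · have hmax : ∀ x, x ⬝ᵥ (mwLap n k W *ᵥ x) ≤ lam (n * k - 1) * (x ⬝ᵥ x) := fun x =>
      hLW ▸ quadForm_le_of_forall hU fun p _ =>
        hlam (finProdFinEquiv p).2 (by simp; omega) (by have := (finProdFinEquiv p).2; omega)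
    have := quadForm_trLap_le W hdiag hmax (Ut *ᵥ Pi.single ⟨n - 1, by omega⟩ 1)
    rw [hLtr, quadForm_mulVec_single hUt, dotProduct_self_mulVec_single hUt, mul_one] at this
    rw [div_le_iff₀ (by exact_mod_cast hk)]
    linarith
end
end

section
/- Let (G,W) be a matrix-weighted graph with n vertices and k×k weights, with adjacency matrix A_W having eigenvalues μ_1(A_W) ≥ … ≥ μ_{nk}(A_W), and let A_{tr W} be the adjacency matrix of the scalar-weighted graph (G, tr W), with eigenvalues μ_1(A_{tr W}) ≥ … ≥ μ_n(A_{tr W}). Then ∑_{i=1}^{k} μ_i(A_W) ≥ μ_1(A_{tr W}) ≥ μ_n(A_{tr W}) ≥ ∑_{i=1}^{k} μ_{(n−1)k+i}(A_W). -/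
/-!
For a unit vector `x ∈ ℝⁿ`, the `kn × k` matrix `Y = x ⊗ I_k` has orthonormal columns and
`tr (Yᵀ A_W Y) = xᵀ A_{tr W} x`. Writing `A_W = U D Uᵀ`, this trace is `∑ p, μ_p c_p`, where the
weights `c_p` form the diagonal of the orthogonal projection `(Uᵀ Y)(Uᵀ Y)ᵀ`: they lie in `[0, 1]`
and sum to `k`. Such a weighted sum lies between the sums of the `k` smallest and of the `k`
largest `μ_p`. Taking for `x` the eigenvectors of `A_{tr W}` for its largest and smallest
eigenvalues gives the two outer inequalities.
-/

open Matrix Finset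

noncomputable section

/-- The adjacency matrix of the scalar-weighted trace graph `(G, tr W)`, with
entries `tr (W u v)`. -/
def trAdj (n k : ℕ) (W : Fin n → Fin n → Matrix (Fin k) (Fin k) ℝ) :
    Matrix (Fin n) (Fin n) ℝ :=
  fun u v => (W u v).trace

theorem sum_mul_le_sum_mul_of_threshold {ι : Type*} [Fintype ι] {f c d : ι → ℝ} (t : ℝ)
    (hsum : ∑ p, c p = ∑ p, d p) (ht : ∀ p, (f p - t) * (c p - d p) ≤ 0) :
    ∑ p, f p * c p ≤ ∑ p, f p * d p := by
  have expand : ∑ p, (f p - t) * (c p - d p)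
      = ∑ p, f p * c p - ∑ p, f p * d p - t * (∑ p, c p - ∑ p, d p) := by
    simp only [Finset.mul_sum, ← Finset.sum_sub_distrib]
    exact Finset.sum_congr rfl fun p _ => by ring
  have key : ∑ p, (f p - t) * (c p - d p) ≤ 0 := Finset.sum_nonpos fun p _ => ht p
  rw [expand, hsum, sub_self, mul_zero, sub_zero] at key
  linarith

theorem le_card_of_sum_eq_of_le_one {ι : Type*} [Fintype ι] {c : ι → ℝ} {k : ℕ}
    (hc1 : ∀ p, c p ≤ 1) (hc : ∑ p, c p = k) : k ≤ Fintype.card ι := by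
  have : (k : ℝ) ≤ Fintype.card ι :=
    calc (k : ℝ) = ∑ p, c p := hc.symm
      _ ≤ ∑ _p : ι, (1 : ℝ) := Finset.sum_le_sum fun p _ => hc1 p
      _ = Fintype.card ι := by simp
  exact_mod_cast this

theorem sum_mul_ite_lt_eq_sum_range {ι : Type*} [Fintype ι] {N k : ℕ} (e : ι ≃ Fin N)
    (hk : k ≤ N) (g : ℕ → ℝ) :
    ∑ p, g (e p) * (if (e p : ℕ) < k then 1 else 0) = ∑ i ∈ range k, g i := by
  rw [e.sum_comp (fun i => g i * if (i : ℕ) < k then 1 else 0),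
    Fin.sum_univ_eq_sum_range (fun i => g i * if i < k then 1 else 0)]
  simp only [mul_ite, mul_one, mul_zero]
  rw [← Finset.sum_filter]
  congr 1
  ext i
  simp only [mem_filter, mem_range]
  omega

section KyFan

variable {ι : Type*} [Fintype ι] {N k : ℕ} (e : ι ≃ Fin N) {mu : ℕ → ℝ} {c : ι → ℝ}

theorem AntitoneOn.sum_mul_le_sum_range (hmu : AntitoneOn mu (Set.Iio N))
    (hc0 : ∀ p, 0 ≤ c p) (hc1 : ∀ p, c p ≤ 1) (hc : ∑ p, c p = k) :
    ∑ p, mu (e p) * c p ≤ ∑ i ∈ range k, mu i := by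
  have hk : k ≤ N := by simpa [Fintype.card_congr e] using le_card_of_sum_eq_of_le_one hc1 hc
  rw [← sum_mul_ite_lt_eq_sum_range e hk]
  -- `mu (k - 1)` separates the `k` largest values from the others; for `k = 0` it is `mu 0`.
  refine sum_mul_le_sum_mul_of_threshold (mu (k - 1)) ?_ fun p => ?_
  · simpa [hc] using (sum_mul_ite_lt_eq_sum_range e hk fun _ => 1).symm
  have hp : (e p : ℕ) < N := (e p).isLt
  split_ifs with hpk
  · have : mu (k - 1) ≤ mu (e p) := hmu hp (by simp; omega) (by omega)
    nlinarith [hc1 p]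
  · have : mu (e p) ≤ mu (k - 1) := hmu (by simp; omega) hp (by omega)
    nlinarith [hc0 p]

-- The upper bound for the complementary weights `1 - c`.
theorem AntitoneOn.sum_range_le_sum_mul (hmu : AntitoneOn mu (Set.Iio N))
    (hc0 : ∀ p, 0 ≤ c p) (hc1 : ∀ p, c p ≤ 1) (hc : ∑ p, c p = k) :
    ∑ i ∈ range k, mu (N - k + i) ≤ ∑ p, mu (e p) * c p := by
  have hk : k ≤ N := by simpa [Fintype.card_congr e] using le_card_of_sum_eq_of_le_one hc1 hc
  have hcompl := hmu.sum_mul_le_sum_range e (c := fun p => 1 - c p) (k := N - k)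
    (fun p => by linarith [hc1 p]) (fun p => by linarith [hc0 p])
    (by simp [Finset.sum_sub_distrib, hc, Fintype.card_congr e, hk])
  have htotal : ∑ p, mu (e p) = ∑ i ∈ range N, mu i := by
    rw [e.sum_comp (fun i => mu i), Fin.sum_univ_eq_sum_range]
  have hsplit := Finset.sum_range_add mu (N - k) k
  rw [Nat.sub_add_cancel hk] at hsplit
  simp only [mul_sub, mul_one, Finset.sum_sub_distrib, htotal] at hcompl
  linarith

end KyFan

theorem Matrix.IsSymm.diag_mem_Icc_of_mul_self_eq {ι : Type*} [Fintype ι]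
    {P : Matrix ι ι ℝ} (hP : P.IsSymm) (hPP : P * P = P) (p : ι) : P p p ∈ Set.Icc 0 1 := by
  have hsq : P p p = ∑ q, P p q ^ 2 := by
    conv_lhs => rw [← hPP, mul_apply]
    exact Finset.sum_congr rfl fun q _ => by rw [hP.apply p q, sq]
  have : P p p ^ 2 ≤ P p p := hsq ▸ Finset.single_le_sum (f := fun q => P p q ^ 2)
    (fun q _ => sq_nonneg _) (Finset.mem_univ p)
  constructor <;> nlinarith

theorem Matrix.trace_transpose_mul_diagonal_mul {ι κ : Type*} [Fintype ι] [Fintype κ]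
    [DecidableEq ι] (Z : Matrix ι κ ℝ) (d : ι → ℝ) :
    (Zᵀ * diagonal d * Z).trace = ∑ p, d p * (Z * Zᵀ) p p := by
  rw [Matrix.mul_assoc, trace_mul_comm, Matrix.mul_assoc]
  simp only [trace, diag_apply, diagonal_mul]

section KyFanTrace

variable {ι κ : Type*} [Fintype ι] [Fintype κ] [DecidableEq ι] [DecidableEq κ] {N : ℕ}
  (e : ι ≃ Fin N) {mu : ℕ → ℝ}

theorem AntitoneOn.trace_transpose_mul_diagonal_mul_mem_Icc
    (hmu : AntitoneOn mu (Set.Iio N)) {Z : Matrix ι κ ℝ} (hZ : Zᵀ * Z = 1) :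
    (Zᵀ * diagonal (fun p => mu (e p)) * Z).trace ∈
      Set.Icc (∑ i ∈ range (Fintype.card κ), mu (N - Fintype.card κ + i))
        (∑ i ∈ range (Fintype.card κ), mu i) := by
  have hproj : (Z * Zᵀ) * (Z * Zᵀ) = Z * Zᵀ := by
    rw [Matrix.mul_assoc, ← Matrix.mul_assoc Zᵀ, hZ, Matrix.one_mul]
  have hsymm : (Z * Zᵀ).IsSymm := by simp [IsSymm, transpose_mul]
  have hweight := (hsymm.diag_mem_Icc_of_mul_self_eq hproj ·)
  have htotal : ∑ p, (Z * Zᵀ) p p = Fintype.card κ := by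
    simpa [trace, hZ] using trace_mul_comm Z Zᵀ
  rw [trace_transpose_mul_diagonal_mul]
  exact ⟨hmu.sum_range_le_sum_mul e (fun p => (hweight p).1) (fun p => (hweight p).2) htotal,
    hmu.sum_mul_le_sum_range e (fun p => (hweight p).1) (fun p => (hweight p).2) htotal⟩

theorem AntitoneOn.trace_transpose_mul_mul_mem_Icc
    (hmu : AntitoneOn mu (Set.Iio N)) {A U : Matrix ι ι ℝ} (hU : U * Uᵀ = 1)
    (hA : A = U * diagonal (fun p => mu (e p)) * Uᵀ) {Y : Matrix ι κ ℝ} (hY : Yᵀ * Y = 1) :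
    (Yᵀ * A * Y).trace ∈
      Set.Icc (∑ i ∈ range (Fintype.card κ), mu (N - Fintype.card κ + i))
        (∑ i ∈ range (Fintype.card κ), mu i) := by
  have hZ : (Uᵀ * Y)ᵀ * (Uᵀ * Y) = 1 := by
    rw [transpose_mul, transpose_transpose, Matrix.mul_assoc, ← Matrix.mul_assoc U, hU,
      Matrix.one_mul, hY]
  convert hmu.trace_transpose_mul_diagonal_mul_mem_Icc e hZ using 2
  simp only [hA, transpose_mul, transpose_transpose, Matrix.mul_assoc]

end KyFanTrace

theorem Matrix.dotProduct_transpose_self_of_mul_transpose_eq_one {ι : Type*} [Fintype ι]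
    [DecidableEq ι] {V : Matrix ι ι ℝ} (hV : V * Vᵀ = 1) (j : ι) : Vᵀ j ⬝ᵥ Vᵀ j = 1 := by
  have hV' : (Vᵀ * V) j j = 1 := by rw [mul_eq_one_comm.mp hV, one_apply_eq]
  rwa [mul_apply'] at hV'

theorem Matrix.eq_dotProduct_mulVec_of_eq_mul_diagonal_mul {ι : Type*} [Fintype ι]
    [DecidableEq ι] {A V : Matrix ι ι ℝ} {d : ι → ℝ} (hV : V * Vᵀ = 1)
    (hA : A = V * diagonal d * Vᵀ) (j : ι) : d j = Vᵀ j ⬝ᵥ A *ᵥ Vᵀ j := by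
  have hV' : Vᵀ * V = 1 := mul_eq_one_comm.mp hV
  have hdiag : Vᵀ * A * V = diagonal d := by
    rw [hA, ← Matrix.mul_assoc, ← Matrix.mul_assoc, hV', Matrix.one_mul, Matrix.mul_assoc, hV',
      Matrix.mul_one]
  rw [← diagonal_apply_eq d j, ← hdiag, Matrix.mul_assoc, mul_apply']
  rfl

/-- The `ι × κ` by `κ` matrix `x ⊗ I_κ`. -/
def vecKronId {ι : Type*} (κ : Type*) [DecidableEq κ] (x : ι → ℝ) : Matrix (ι × κ) κ ℝ :=
  fun p j => if p.2 = j then x p.1 else 0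

theorem vecKronId_transpose_mul_self {ι κ : Type*} [Fintype ι] [Fintype κ] [DecidableEq κ]
    (x : ι → ℝ) : (vecKronId κ x)ᵀ * vecKronId κ x = (x ⬝ᵥ x) • 1 := by
  ext i j
  simp [vecKronId, mul_apply, Fintype.sum_prod_type, one_apply, dotProduct, eq_comm]

theorem trace_vecKronId_mwAdj {n k : ℕ} (W : Fin n → Fin n → Matrix (Fin k) (Fin k) ℝ)
    (x : Fin n → ℝ) :
    ((vecKronId (Fin k) x)ᵀ * mwAdj n k W * vecKronId (Fin k) x).trace =
      x ⬝ᵥ trAdj n k W *ᵥ x := by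
  simp only [vecKronId, trace, diag_apply, mul_apply, transpose_apply, Fintype.sum_prod_type,
    mwAdj, trAdj, dotProduct, mulVec, ite_mul, mul_ite, zero_mul, mul_zero,
    Finset.sum_ite_eq', Finset.mem_univ, if_true, Finset.mul_sum, Finset.sum_mul, mul_assoc]
  rw [Finset.sum_congr rfl fun _ _ => Finset.sum_comm, Finset.sum_comm]
  exact Finset.sum_congr rfl fun _ _ => Finset.sum_comm

theorem dotProduct_trAdj_mulVec_mem_Icc {n k : ℕ}
    (W : Fin n → Fin n → Matrix (Fin k) (Fin k) ℝ)
    {mu : ℕ → ℝ} (hmu : AntitoneOn mu (Set.Iio (n * k)))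
    {U : Matrix (Fin n × Fin k) (Fin n × Fin k) ℝ} (hU : U * Uᵀ = 1)
    (hAW : mwAdj n k W = U * diagonal (fun p => mu (finProdFinEquiv p)) * Uᵀ)
    {x : Fin n → ℝ} (hx : x ⬝ᵥ x = 1) :
    x ⬝ᵥ trAdj n k W *ᵥ x ∈
      Set.Icc (∑ i ∈ range k, mu ((n - 1) * k + i)) (∑ i ∈ range k, mu i) := by
  have hY : (vecKronId (Fin k) x)ᵀ * vecKronId (Fin k) x = 1 := by
    rw [vecKronId_transpose_mul_self, hx, one_smul]
  have := hmu.trace_transpose_mul_mul_mem_Icc finProdFinEquiv hU hAW hY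
  rwa [trace_vecKronId_mwAdj, Fintype.card_fin, ← Nat.sub_one_mul] at this

theorem matrix_weighted_adjacency_trace_bound_general
    (n k : ℕ) (hn : 0 < n)
    (W : Fin n → Fin n → Matrix (Fin k) (Fin k) ℝ)
    (mu : ℕ → ℝ) (hmu : AntitoneOn mu (Set.Iio (n * k)))
    (U : Matrix (Fin n × Fin k) (Fin n × Fin k) ℝ) (hU : U * Uᵀ = 1)
    (hAW : mwAdj n k W =
      U * Matrix.diagonal (fun p => mu (finProdFinEquiv p)) * Uᵀ)
    (nu : ℕ → ℝ) (hnu : AntitoneOn nu (Set.Iio n))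
    (Ut : Matrix (Fin n) (Fin n) ℝ) (hUt : Ut * Utᵀ = 1)
    (hAtr : trAdj n k W = Ut * Matrix.diagonal (fun v : Fin n => nu v) * Utᵀ) :
    nu 0 ≤ (∑ i ∈ Finset.range k, mu i) ∧
      nu (n - 1) ≤ nu 0 ∧
      (∑ i ∈ Finset.range k, mu ((n - 1) * k + i)) ≤ nu (n - 1) := by
  have rayleigh_mem_Icc (j : Fin n) := dotProduct_trAdj_mulVec_mem_Icc W hmu hU hAW
    (dotProduct_transpose_self_of_mul_transpose_eq_one hUt j)
  have hlast : n - 1 < n := Nat.sub_lt hn one_pos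
  refine ⟨?_, hnu hn hlast (Nat.zero_le _), ?_⟩
  · rw [eq_dotProduct_mulVec_of_eq_mul_diagonal_mul hUt hAtr ⟨0, hn⟩]
    exact (rayleigh_mem_Icc ⟨0, hn⟩).2
  · rw [eq_dotProduct_mulVec_of_eq_mul_diagonal_mul hUt hAtr ⟨n - 1, hlast⟩]
    exact (rayleigh_mem_Icc ⟨n - 1, hlast⟩).1

/-- Trace bound relating the adjacency spectra of a matrix-weighted graph `(G, W)`
and its trace graph `(G, tr W)`:
`∑_{i=1}^k μ_i(A_W) ≥ μ_1(A_{tr W}) ≥ μ_n(A_{tr W}) ≥ ∑_{i=1}^k μ_{(n-1)k+i}(A_W)`.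
Here `mu` (resp. `nu`) enumerates the eigenvalues of `A_W` (resp. `A_{tr W}`) in
decreasing order with multiplicity (0-indexed), witnessed by orthogonal spectral
decompositions. -/
theorem matrix_weighted_adjacency_trace_bound
    (n k : ℕ) (hn : 0 < n) (G : SimpleGraph (Fin n))
    (W : Fin n → Fin n → Matrix (Fin k) (Fin k) ℝ)
    (hpsd : ∀ u v, (W u v).PosSemidef)
    (hsym : ∀ u v, W u v = W v u)
    (h0 : ∀ u v, ¬ G.Adj u v → W u v = 0)
    (mu : ℕ → ℝ) (hmu : AntitoneOn mu (Set.Iio (n * k)))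
    (U : Matrix (Fin n × Fin k) (Fin n × Fin k) ℝ) (hU : U * Uᵀ = 1)
    (hAW : mwAdj n k W =
      U * Matrix.diagonal (fun p => mu (finProdFinEquiv p)) * Uᵀ)
    (nu : ℕ → ℝ) (hnu : AntitoneOn nu (Set.Iio n))
    (Ut : Matrix (Fin n) (Fin n) ℝ) (hUt : Ut * Utᵀ = 1)
    (hAtr : trAdj n k W = Ut * Matrix.diagonal (fun v : Fin n => nu v) * Utᵀ) :
    nu 0 ≤ (∑ i ∈ Finset.range k, mu i) ∧
      nu (n - 1) ≤ nu 0 ∧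
      (∑ i ∈ Finset.range k, mu ((n - 1) * k + i)) ≤ nu (n - 1) :=
  matrix_weighted_adjacency_trace_bound_general n k hn W mu hmu U hU hAW nu hnu Ut hUt hAtr
end
end

section
/- Let (G,W) be a d-regular matrix-weighted graph on n vertices with k×k weight matrices and adjacency matrix A. For a vertex subset S, let I_S be the kn×k block matrix whose block at vertex v is I_k if v ∈ S and 0 otherwise, let I_G = I_V, and let I_S^⊥ = I_S − (|S|/n)·I_G, and similarly for T. Then E(S,T) − (d·|S|·|T|/n)·I_k = (I_S^⊥)ᵀ A I_T^⊥. -/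
open Matrix Finset

noncomputable section

/-- The matrix-weighted edge count between vertex subsets `S` and `T`:
`E(S,T) = ∑_{s ∈ S, t ∈ T} W s t`, a `k × k` matrix. -/
def mwEdge (n k : ℕ) (W : Fin n → Fin n → Matrix (Fin k) (Fin k) ℝ)
    (S T : Finset (Fin n)) : Matrix (Fin k) (Fin k) ℝ :=
  ∑ s ∈ S, ∑ t ∈ T, W s t

/-- The `kn × k` block indicator matrix of a vertex subset `S`: the block at a
vertex `v` is `I_k` if `v ∈ S` and `0` otherwise. -/
def mwInd (n k : ℕ) (S : Finset (Fin n)) : Matrix (Fin n × Fin k) (Fin k) ℝ :=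
  fun p j => if p.1 ∈ S ∧ p.2 = j then 1 else 0
/-! Expand `(I_S - (|S|/n) I_V)ᵀ A (I_T - (|T|/n) I_V)` bilinearly. Each block indicator sandwich
`I_Xᵀ A I_Y` is the edge count `E(X,Y)`, and `d`-regularity (together with symmetry, for sums over
the second argument) evaluates the three terms involving `V`: `E(V,T) = d|T| I`, `E(S,V) = d|S| I`
and `E(V,V) = dn I`. Their coefficients then add up to `d|S||T|/n`. -/

section

variable {n k : ℕ} (W : Fin n → Fin n → Matrix (Fin k) (Fin k) ℝ)

lemma mwInd_transpose_mul_mwAdj_mul_mwInd (S T : Finset (Fin n)) :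
    (mwInd n k S)ᵀ * mwAdj n k W * mwInd n k T = mwEdge n k W S T := by
  ext i j
  simpa [mul_apply, mwAdj, mwInd, mwEdge, Fintype.sum_prod_type, Matrix.sum_apply, ite_and]
    using Finset.sum_comm

lemma mwEdge_comm {W} (hsym : ∀ u v, W u v = W v u) (S T : Finset (Fin n)) :
    mwEdge n k W S T = mwEdge n k W T S := by
  rw [mwEdge, mwEdge, Finset.sum_comm]
  exact sum_congr rfl fun t _ ↦ sum_congr rfl fun s _ ↦ hsym s t

lemma mwEdge_univ_left {W} {d : ℝ} (hreg : ∀ v, ∑ u, W u v = d • (1 : Matrix (Fin k) (Fin k) ℝ))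
    (T : Finset (Fin n)) :
    mwEdge n k W univ T = ((T.card : ℝ) * d) • (1 : Matrix (Fin k) (Fin k) ℝ) := by
  rw [mwEdge, Finset.sum_comm]
  simp only [hreg, sum_const, ← Nat.cast_smul_eq_nsmul ℝ, smul_smul]

lemma mwEdge_univ_right {W} {d : ℝ} (hsym : ∀ u v, W u v = W v u)
    (hreg : ∀ v, ∑ u, W u v = d • (1 : Matrix (Fin k) (Fin k) ℝ)) (S : Finset (Fin n)) :
    mwEdge n k W S univ = ((S.card : ℝ) * d) • (1 : Matrix (Fin k) (Fin k) ℝ) := by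
  rw [mwEdge_comm hsym, mwEdge_univ_left hreg]

end

theorem matrix_weighted_expander_mixing_identity_general
    (n k : ℕ) (d : ℝ)
    (W : Fin n → Fin n → Matrix (Fin k) (Fin k) ℝ)
    (hsym : ∀ u v, W u v = W v u)
    (hreg : ∀ v : Fin n, ∑ u, W u v = d • (1 : Matrix (Fin k) (Fin k) ℝ))
    (S T : Finset (Fin n)) :
    mwEdge n k W S T -
        (d * S.card * T.card / n) • (1 : Matrix (Fin k) (Fin k) ℝ) =
      (mwInd n k S - ((S.card : ℝ) / n) • mwInd n k Finset.univ)ᵀ *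
        mwAdj n k W *
        (mwInd n k T - ((T.card : ℝ) / n) • mwInd n k Finset.univ) := by
  -- for `n = 0` both sides vanish, since `x / 0 = 0`
  have hcoeff : (S.card / n : ℝ) * (T.card / n) * (n * d) = d * S.card * T.card / n := by
    rcases eq_or_ne (n : ℝ) 0 with hn | hn
    · simp [hn]
    · field_simp
  simp only [transpose_sub, transpose_smul, Matrix.sub_mul, Matrix.mul_sub, Matrix.smul_mul,
    Matrix.mul_smul, mwInd_transpose_mul_mwAdj_mul_mwInd, mwEdge_univ_left hreg,
    mwEdge_univ_right hsym hreg, card_univ, Fintype.card_fin, smul_smul]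
  linear_combination (norm := module) -hcoeff • (1 : Matrix (Fin k) (Fin k) ℝ)

/-- Key identity in the proof of the expander mixing lemma for `d`-regular
matrix-weighted graphs: with `I_S^⊥ = I_S - (|S|/n) I_G` (and similarly for `T`),
`E(S,T) - (d|S||T|/n) I_k = (I_S^⊥)ᵀ A I_T^⊥`. -/
theorem matrix_weighted_expander_mixing_identity
    (n k : ℕ) (d : ℝ) (G : SimpleGraph (Fin n))
    (W : Fin n → Fin n → Matrix (Fin k) (Fin k) ℝ)
    (hpsd : ∀ u v, (W u v).PosSemidef)
    (hsym : ∀ u v, W u v = W v u)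
    (h0 : ∀ u v, ¬ G.Adj u v → W u v = 0)
    (hreg : ∀ v : Fin n, ∑ u, W u v = d • (1 : Matrix (Fin k) (Fin k) ℝ))
    (S T : Finset (Fin n)) :
    mwEdge n k W S T -
        (d * S.card * T.card / n) • (1 : Matrix (Fin k) (Fin k) ℝ) =
      (mwInd n k S - ((S.card : ℝ) / n) • mwInd n k Finset.univ)ᵀ *
        mwAdj n k W *
        (mwInd n k T - ((T.card : ℝ) / n) • mwInd n k Finset.univ) :=
  matrix_weighted_expander_mixing_identity_general n k d W hsym hreg S T
end
end

section
/- (Expander mixing lemma for irregular matrix-weighted graphs.) Let (G,W) be a matrix-weighted graph with n vertices and k×k weight matrices whose degree matrix D is invertible. Let Ã = D^{−1/2} A D^{−1/2} be the normalized adjacency matrix, with eigenvalues μ̃_1, μ̃_2, … ordered by decreasing absolute value, so that 1 = μ̃_1 = … = μ̃_k. For vertex subsets A, B define the k×k matrices vol(S) = ∑_{s∈S} D_s and V(A,B) = vol(A)·vol(V)^{−1}·vol(B). Then for all vertex subsets S and T, | tr( E(S,T) − V(S,T) ) | ≤ |μ̃_{k+1}| · √( tr(vol(S) − V(S,S)) ·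 tr(vol(T) − V(T,T)) ). -/
open Matrix Finset

noncomputable section

def mwVol (n k : ℕ) (W : Fin n → Fin n → Matrix (Fin k) (Fin k) ℝ)
    (S : Finset (Fin n)) : Matrix (Fin k) (Fin k) ℝ :=
  ∑ s ∈ S, ∑ u, W u s

/-!
Write `D = R²`, `N = R⁻¹ A R⁻¹ = U diag(μ̃) Uᵀ`, and let `P_S` be the `kn × k` block indicator
of `S` (identity blocks at the vertices of `S`). Then `E(S,T) = (R P_S)ᵀ N (R P_T)` and
`vol(S ∩ T) = (R P_S)ᵀ (R P_T)`; since `A P_V = D P_V`, the `k` independent columns of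
`z = R P_V` are fixed by `N`. With `Q` the orthogonal projection onto the complement of the
column space of `z`, `E(S,T) - V(S,T) = (Q R P_S)ᵀ N (Q R P_T)` and
`vol(S) - V(S,S) = (Q R P_S)ᵀ (Q R P_S)`. The columns of `Q R P_S` have no component along
eigenvectors whose eigenvalue exceeds `|μ̃_{k+1}|` in modulus: such an eigenvalue is `1`, which
then has multiplicity exactly `k`, so its eigenspace is spanned by the columns of `z`.
Cauchy–Schwarz for the trace pairing gives the bound.
-/

section TraceBound

variable {m κ : Type*} [Fintype m] [Fintype κ] [DecidableEq m]

theorem abs_trace_transpose_mul_diagonal_mul_le (α β : Matrix m κ ℝ) (d : m → ℝ) {c : ℝ}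
    (hc : 0 ≤ c) (h : ∀ p, c < |d p| → ∀ j, α p j = 0) :
    |(αᵀ * diagonal d * β).trace| ≤ c * √((αᵀ * α).trace * (βᵀ * β).trace) := by
  have hterm : ∀ p j, |α p j * d p * β p j| ≤ c * (|α p j| * |β p j|) := by
    intro p j
    rcases le_or_gt |d p| c with hd | hd
    · rw [abs_mul, abs_mul, mul_right_comm, mul_comm c]
      exact mul_le_mul_of_nonneg_left hd (by positivity)
    · simp [h p hd j]
  have hsq : ∀ γ : Matrix m κ ℝ, (γᵀ * γ).trace = ∑ q : κ × m, |γ q.2 q.1| ^ 2 := by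
    intro γ
    simp [trace, mul_apply, Fintype.sum_prod_type, sq]
  calc |(αᵀ * diagonal d * β).trace| = |∑ q : κ × m, α q.2 q.1 * d q.2 * β q.2 q.1| := by
        simp [trace, mul_apply, diagonal_apply, Fintype.sum_prod_type]
    _ ≤ ∑ q : κ × m, c * (|α q.2 q.1| * |β q.2 q.1|) :=
        (abs_sum_le_sum_abs _ _).trans (sum_le_sum fun q _ => hterm _ _)
    _ ≤ c * (√(∑ q : κ × m, |α q.2 q.1| ^ 2) * √(∑ q : κ × m, |β q.2 q.1| ^ 2)) := by
        rw [← mul_sum]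
        exact mul_le_mul_of_nonneg_left (Real.sum_mul_le_sqrt_mul_sqrt _ _ _) hc
    _ = c * √((αᵀ * α).trace * (βᵀ * β).trace) := by
        rw [hsq, hsq, Real.sqrt_mul (sum_nonneg fun _ _ => sq_nonneg _)]

theorem gram_transpose_mul_of_orthogonal {l l' : Type*} {U : Matrix m m ℝ} (hU : U * Uᵀ = 1)
    (x : Matrix m l ℝ) (y : Matrix m l' ℝ) : (Uᵀ * x)ᵀ * (Uᵀ * y) = xᵀ * y := by
  rw [transpose_mul, transpose_transpose, Matrix.mul_assoc, ← Matrix.mul_assoc U, hU,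
    Matrix.one_mul]

theorem abs_trace_transpose_mul_conj_diagonal_mul_le {U : Matrix m m ℝ} (hU : U * Uᵀ = 1)
    (d : m → ℝ) {c : ℝ} (hc : 0 ≤ c) (a b : Matrix m κ ℝ)
    (h : ∀ p, c < |d p| → ∀ j, (Uᵀ * a) p j = 0) :
    |(aᵀ * (U * diagonal d * Uᵀ) * b).trace| ≤ c * √((aᵀ * a).trace * (bᵀ * b).trace) := by
  have hconj : (Uᵀ * a)ᵀ * diagonal d * (Uᵀ * b) = aᵀ * (U * diagonal d * Uᵀ) * b := by
    simp only [transpose_mul, transpose_transpose, Matrix.mul_assoc]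
  simpa only [hconj, gram_transpose_mul_of_orthogonal hU] using
    abs_trace_transpose_mul_diagonal_mul_le (Uᵀ * a) (Uᵀ * b) d hc h

end TraceBound

section Support

variable {m κ : Type*} [Fintype m]

theorem transpose_mul_eq_of_rows_supported {l : Type*} {Y : Matrix m κ ℝ} {s : Finset m}
    (hYs : ∀ p ∉ s, Y p = 0) (X : Matrix m l ℝ) :
    (Y.submatrix ((↑) : s → m) id)ᵀ * X.submatrix ((↑) : s → m) id = Yᵀ * X := by
  ext i j
  simp only [mul_apply, transpose_apply, submatrix_apply, id_eq]
  rw [sum_coe_sort s fun q => Y q i * X q j]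
  exact sum_subset (subset_univ s) fun q _ hq => by simp [hYs q hq]

variable [Fintype κ] [DecidableEq κ]

theorem eq_zero_of_transpose_mul_eq_zero {l : Type*} {Y : Matrix m κ ℝ} {s : Finset m}
    (hYs : ∀ p ∉ s, Y p = 0) (hcard : #s ≤ Fintype.card κ) (hY : IsUnit (Yᵀ * Y).det)
    {X : Matrix m l ℝ} (hX : Yᵀ * X = 0) {p : m} (hp : p ∈ s) (j : l) : X p j = 0 := by
  classical
  have : Nonempty l := ⟨j⟩
  set Ys : Matrix s κ ℝ := Y.submatrix (↑) id
  have hrank : Ys.rank = Fintype.card κ := by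
    rw [← rank_transpose_mul_self, transpose_mul_eq_of_rows_supported hYs,
      rank_of_isUnit _ ((isUnit_iff_isUnit_det _).mpr hY)]
  have hinj : Function.Injective fun B : Matrix s l ℝ => Ysᵀ * B := by
    rw [mul_right_injective_iff_mulVec_injective, mulVec_injective_iff, col_transpose,
      linearIndependent_iff_card_eq_finrank_span, Set.finrank, ← rank_eq_finrank_span_row]
    have := Ys.rank_le_card_height
    simp only [Fintype.card_coe] at this ⊢
    omega
  have hXs : Ysᵀ * X.submatrix ((↑) : s → m) id = Ysᵀ * (0 : Matrix s l ℝ) := by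
    rw [transpose_mul_eq_of_rows_supported hYs, hX, Matrix.mul_zero]
  exact congrFun (congrFun (hinj hXs) ⟨p, hp⟩) j

theorem isUnit_det_transpose_mul_self_of_injective {z : Matrix m κ ℝ}
    (hz : Function.Injective z.mulVec) :
    IsUnit (zᵀ * z).det := by
  rw [← isUnit_iff_isUnit_det, ← mulVec_injective_iff_isUnit]
  exact LinearMap.ker_eq_bot.mp
    ((ker_mulVecLin_transpose_mul_self z).trans (LinearMap.ker_eq_bot.mpr hz))

end Support

section Eigen

variable {m κ l : Type*} [Fintype m] [Fintype κ] [DecidableEq m] [DecidableEq κ]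

theorem eigencoord_eq_zero_of_orthogonal_fixed {U : Matrix m m ℝ} (hU : U * Uᵀ = 1)
    {d : m → ℝ} {z : Matrix m κ ℝ} (hz : IsUnit (zᵀ * z).det)
    (hfix : U * diagonal d * Uᵀ * z = z) (hmult : #{p | d p = 1} ≤ Fintype.card κ)
    {a : Matrix m l ℝ} (ha : zᵀ * a = 0) {p : m} (hp : d p = 1) (j : l) :
    (Uᵀ * a) p j = 0 := by
  have hUU : Uᵀ * U = 1 := mul_eq_one_comm.mp hU
  have hUz : diagonal d * (Uᵀ * z) = Uᵀ * z := by
    conv_rhs => rw [← hfix]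
    simp only [← Matrix.mul_assoc, hUU, Matrix.one_mul]
  have hsupp : ∀ q ∉ ({q | d q = 1} : Finset m), (Uᵀ * z) q = 0 := by
    intro q hq
    ext i
    have hqi := congrFun (congrFun hUz q) i
    rw [diagonal_mul] at hqi
    exact (mul_left_eq_self₀.mp hqi).resolve_left (by simpa using hq)
  refine eq_zero_of_transpose_mul_eq_zero hsupp hmult
    (by rwa [gram_transpose_mul_of_orthogonal hU]) ?_ (by simpa using hp) j
  rw [gram_transpose_mul_of_orthogonal hU, ha]

end Eigen

section SpectralGap

variable {m κ : Type*} [Fintype m] [Fintype κ] [DecidableEq m]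

theorem abs_trace_le_of_orthogonal_fixed {N : ℕ} (e : m ≃ Fin N) {mu : ℕ → ℝ}
    (hmu : AntitoneOn (fun i => |mu i|) (Set.Iio N)) {k : ℕ} (htop : ∀ i < k, mu i = 1)
    {U : Matrix m m ℝ} (hU : U * Uᵀ = 1) {z : Matrix m (Fin k) ℝ} (hz : IsUnit (zᵀ * z).det)
    (hfix : U * diagonal (fun p => mu (e p)) * Uᵀ * z = z) {a b : Matrix m κ ℝ}
    (ha : zᵀ * a = 0) :
    |(aᵀ * (U * diagonal (fun p => mu (e p)) * Uᵀ) * b).trace| ≤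
      |mu k| * √((aᵀ * a).trace * (bᵀ * b).trace) := by
  have htail : ∀ i : Fin N, k ≤ i → |mu i| ≤ |mu k| := fun i hi =>
    hmu (hi.trans_lt i.isLt) i.isLt hi
  refine abs_trace_transpose_mul_conj_diagonal_mul_le hU _ (abs_nonneg _) a b fun p hp j => ?_
  have hpk : (e p : ℕ) < k := by
    by_contra! h
    exact (htail _ h).not_gt hp
  have hp1 : mu (e p) = 1 := htop _ hpk
  have hgap : |mu k| < 1 := by simpa [hp1] using hp
  have hmult : #{q | mu (e q) = 1} ≤ Fintype.card (Fin k) := by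
    rw [Fintype.card_fin, ← card_range k]
    refine card_le_card_of_injOn (fun q => (e q : ℕ)) (fun q hq => ?_)
      fun q _ q' _ h => e.injective (Fin.ext h)
    by_contra h
    have hq1 : mu (e q) = 1 := (mem_filter.mp hq).2
    have := htail (e q) (by simpa using h)
    rw [hq1, abs_one] at this
    exact this.not_gt hgap
  exact eigencoord_eq_zero_of_orthogonal_fixed hU hz hfix hmult ha hp1 j

end SpectralGap

section Projection

variable {m κ l l' : Type*} [Fintype m] [Fintype κ] [DecidableEq m] [DecidableEq κ]
  (z : Matrix m κ ℝ)

def orthCompProj : Matrix m m ℝ :=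
  1 - z * (zᵀ * z)⁻¹ * zᵀ

theorem orthCompProj_transpose : (orthCompProj z)ᵀ = orthCompProj z := by
  simp [orthCompProj, transpose_mul, transpose_nonsing_inv, Matrix.mul_assoc]

variable {z}

theorem transpose_mul_orthCompProj (hz : IsUnit (zᵀ * z).det) : zᵀ * orthCompProj z = 0 := by
  rw [orthCompProj, Matrix.mul_sub, Matrix.mul_one, ← Matrix.mul_assoc, ← Matrix.mul_assoc,
    mul_nonsing_inv _ hz, Matrix.one_mul, sub_self]

theorem orthCompProj_sandwich (hz : IsUnit (zᵀ * z).det) {N : Matrix m m ℝ}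
    (hN : Nᵀ = N) (hNz : N * z = z) (x : Matrix m l ℝ) (y : Matrix m l' ℝ) :
    (orthCompProj z * x)ᵀ * N * (orthCompProj z * y) =
      xᵀ * N * y - xᵀ * z * (zᵀ * z)⁻¹ * (zᵀ * y) := by
  set G := (zᵀ * z)⁻¹
  have hzN : zᵀ * N = zᵀ := by rw [← hN, ← transpose_mul, hNz]
  have hPN : z * G * zᵀ * N = z * G * zᵀ := by rw [Matrix.mul_assoc, hzN]
  have hNP : N * (z * G * zᵀ) = z * G * zᵀ := by
    rw [← Matrix.mul_assoc, ← Matrix.mul_assoc, hNz]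
  have hPP : z * G * zᵀ * (z * G * zᵀ) = z * G * zᵀ := by
    calc z * G * zᵀ * (z * G * zᵀ) = z * (G * (zᵀ * z)) * G * zᵀ := by
          simp only [Matrix.mul_assoc]
      _ = z * G * zᵀ := by rw [nonsing_inv_mul _ hz, Matrix.mul_one]
  have hQNQ : orthCompProj z * N * orthCompProj z = N - z * G * zᵀ := by
    rw [orthCompProj, sub_mul, Matrix.one_mul, hPN, sub_mul, mul_sub, mul_sub, Matrix.mul_one,
      Matrix.mul_one, hNP, hPP, sub_self, sub_zero]
  calc (orthCompProj z * x)ᵀ * N * (orthCompProj z * y)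
      = xᵀ * (orthCompProj z * N * orthCompProj z) * y := by
        rw [transpose_mul, orthCompProj_transpose]
        simp only [Matrix.mul_assoc]
    _ = xᵀ * N * y - xᵀ * z * G * (zᵀ * y) := by
        rw [hQNQ, Matrix.mul_sub, Matrix.sub_mul]
        simp only [Matrix.mul_assoc]

theorem orthCompProj_gram (hz : IsUnit (zᵀ * z).det) (x : Matrix m l ℝ) (y : Matrix m l' ℝ) :
    (orthCompProj z * x)ᵀ * (orthCompProj z * y) = xᵀ * y - xᵀ * z * (zᵀ * z)⁻¹ * (zᵀ * y) := by
  simpa using orthCompProj_sandwich hz transpose_one (Matrix.one_mul z) x y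

end Projection

section BlockIndicator

variable {V : Type*} (κ : Type*) [Fintype V] [Fintype κ] [DecidableEq V] [DecidableEq κ]

def blockIndicator (S : Finset V) : Matrix (V × κ) κ ℝ :=
  of fun p j => if p.1 ∈ S ∧ p.2 = j then 1 else 0

variable {κ}

theorem mul_blockIndicator_apply {ι : Type*} (M : Matrix ι (V × κ) ℝ) (T : Finset V) (p : ι)
    (j : κ) : (M * blockIndicator κ T) p j = ∑ t ∈ T, M p (t, j) := by
  simp [blockIndicator, mul_apply, Fintype.sum_prod_type, ite_and]

theorem blockIndicator_transpose_mul_mul_apply (M : Matrix (V × κ) (V × κ) ℝ)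
    (S T : Finset V) (i j : κ) :
    ((blockIndicator κ S)ᵀ * M * blockIndicator κ T) i j = ∑ s ∈ S, ∑ t ∈ T, M (s, i) (t, j) := by
  simp [blockIndicator, mul_apply, Fintype.sum_prod_type, ite_and, Finset.sum_comm (s := T)]

theorem blockIndicator_univ_mulVec_injective [Nonempty V] :
    Function.Injective (blockIndicator κ (univ : Finset V)).mulVec := by
  intro c c' h
  ext i
  simpa [blockIndicator, mulVec, dotProduct] using congrFun h (Classical.arbitrary V, i)

end BlockIndicator

section MatrixWeightedGraph

variable {n k : ℕ} (W : Fin n → Fin n → Matrix (Fin k) (Fin k) ℝ)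

theorem blockIndicator_transpose_mul_mwAdj_mul (S T : Finset (Fin n)) :
    (blockIndicator (Fin k) S)ᵀ * mwAdj n k W * blockIndicator (Fin k) T = mwEdge n k W S T := by
  ext i j
  simp [blockIndicator_transpose_mul_mul_apply, mwEdge, mwAdj, Matrix.sum_apply]

theorem blockIndicator_transpose_mul_mwDeg_mul (S T : Finset (Fin n)) :
    (blockIndicator (Fin k) S)ᵀ * mwDeg n k W * blockIndicator (Fin k) T =
      mwVol n k W (S ∩ T) := by
  ext i j
  simp [blockIndicator_transpose_mul_mul_apply, mwDeg, mwVol, Matrix.sum_apply, sum_ite_eq,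
    sum_ite_mem]

theorem mwAdj_mul_blockIndicator_univ (hsym : ∀ u v, W u v = W v u) :
    mwAdj n k W * blockIndicator (Fin k) (univ : Finset (Fin n)) =
      mwDeg n k W * blockIndicator (Fin k) (univ : Finset (Fin n)) := by
  ext p j
  rw [mul_blockIndicator_apply, mul_blockIndicator_apply]
  simp [mwAdj, mwDeg, Matrix.sum_apply, hsym p.1]

variable {W} {R : Matrix (Fin n × Fin k) (Fin n × Fin k) ℝ}

theorem sqrtDeg_mul_blockIndicator_gram (hRT : Rᵀ = R) (hRsq : R * R = mwDeg n k W)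
    (S T : Finset (Fin n)) :
    (R * blockIndicator (Fin k) S)ᵀ * (R * blockIndicator (Fin k) T) = mwVol n k W (S ∩ T) := by
  rw [transpose_mul, hRT, Matrix.mul_assoc, ← Matrix.mul_assoc R, hRsq, ← Matrix.mul_assoc,
    blockIndicator_transpose_mul_mwDeg_mul]

theorem sqrtDeg_mul_blockIndicator_normAdj (hRT : Rᵀ = R) (hR : IsUnit R.det)
    (S T : Finset (Fin n)) :
    (R * blockIndicator (Fin k) S)ᵀ * (R⁻¹ * mwAdj n k W * R⁻¹) * (R * blockIndicator (Fin k) T) =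
      mwEdge n k W S T := by
  rw [transpose_mul, hRT]
  simp only [Matrix.mul_assoc]
  rw [nonsing_inv_mul_cancel_left _ _ hR, ← Matrix.mul_assoc R, mul_nonsing_inv _ hR,
    Matrix.one_mul]
  simp only [← Matrix.mul_assoc]
  exact blockIndicator_transpose_mul_mwAdj_mul W S T

theorem normAdj_mul_sqrtDeg_mul_blockIndicator_univ (hsym : ∀ u v, W u v = W v u)
    (hR : IsUnit R.det) (hRsq : R * R = mwDeg n k W) :
    R⁻¹ * mwAdj n k W * R⁻¹ * (R * blockIndicator (Fin k) (univ : Finset (Fin n))) =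
      R * blockIndicator (Fin k) (univ : Finset (Fin n)) := by
  rw [Matrix.mul_assoc, nonsing_inv_mul_cancel_left _ _ hR, Matrix.mul_assoc,
    mwAdj_mul_blockIndicator_univ W hsym, ← hRsq, Matrix.mul_assoc,
    nonsing_inv_mul_cancel_left _ _ hR]

theorem isUnit_det_sqrtDeg_mul_blockIndicator_univ_gram [NeZero n] (hR : IsUnit R.det) :
    IsUnit ((R * blockIndicator (Fin k) (univ : Finset (Fin n)))ᵀ *
      (R * blockIndicator (Fin k) (univ : Finset (Fin n)))).det := by
  refine isUnit_det_transpose_mul_self_of_injective ?_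
  have hcomp : (R * blockIndicator (Fin k) (univ : Finset (Fin n))).mulVec =
      R.mulVec ∘ (blockIndicator (Fin k) (univ : Finset (Fin n))).mulVec :=
    funext fun v => (mulVec_mulVec v R _).symm
  rw [hcomp]
  exact (mulVec_injective_of_isUnit ((isUnit_iff_isUnit_det R).mpr hR)).comp
    blockIndicator_univ_mulVec_injective

end MatrixWeightedGraph

theorem matrix_weighted_expander_mixing_irregular_general
    (n k : ℕ) (hn : 2 ≤ n)
    (W : Fin n → Fin n → Matrix (Fin k) (Fin k) ℝ)
    (hsym : ∀ u v, W u v = W v u)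
    (hDinv : IsUnit (mwDeg n k W).det)
    (R : Matrix (Fin n × Fin k) (Fin n × Fin k) ℝ)
    (hRpsd : R.PosSemidef) (hRsq : R * R = mwDeg n k W)
    (mu : ℕ → ℝ) (hmu : AntitoneOn (fun i => |mu i|) (Set.Iio (n * k)))
    (htop : ∀ i < k, mu i = 1)
    (U : Matrix (Fin n × Fin k) (Fin n × Fin k) ℝ) (hU : U * Uᵀ = 1)
    (hnormAdj : R⁻¹ * mwAdj n k W * R⁻¹ =
      U * Matrix.diagonal (fun p => mu (finProdFinEquiv p)) * Uᵀ)
    (S T : Finset (Fin n)) :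
    |(mwEdge n k W S T -
        mwVol n k W S * (mwVol n k W Finset.univ)⁻¹ * mwVol n k W T).trace| ≤
      |mu k| *
        Real.sqrt
          ((mwVol n k W S -
              mwVol n k W S * (mwVol n k W Finset.univ)⁻¹ * mwVol n k W S).trace *
            (mwVol n k W T -
              mwVol n k W T * (mwVol n k W Finset.univ)⁻¹ * mwVol n k W T).trace) := by
  have : NeZero n := ⟨by omega⟩
  have hR : IsUnit R.det := isUnit_of_mul_isUnit_left (by rwa [← det_mul, hRsq])
  have hRT : Rᵀ = R := by simpa using hRpsd.isHermitian.eq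
  have hfix := normAdj_mul_sqrtDeg_mul_blockIndicator_univ hsym hR hRsq
  have hz := isUnit_det_sqrtDeg_mul_blockIndicator_univ_gram hR
  have hNT : (R⁻¹ * mwAdj n k W * R⁻¹)ᵀ = R⁻¹ * mwAdj n k W * R⁻¹ := by
    rw [hnormAdj]
    simp [transpose_mul, Matrix.mul_assoc]
  set Q := orthCompProj (R * blockIndicator (Fin k) (univ : Finset (Fin n)))
  have key := abs_trace_le_of_orthogonal_fixed finProdFinEquiv hmu htop hU hz (hnormAdj ▸ hfix)
    (a := Q * (R * blockIndicator (Fin k) S)) (b := Q * (R * blockIndicator (Fin k) T))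
    (by rw [← Matrix.mul_assoc, transpose_mul_orthCompProj hz, Matrix.zero_mul])
  rw [← hnormAdj, orthCompProj_sandwich hz hNT hfix, orthCompProj_gram hz,
    orthCompProj_gram hz] at key
  simpa only [sqrtDeg_mul_blockIndicator_normAdj hRT hR, sqrtDeg_mul_blockIndicator_gram hRT hRsq,
    inter_self, inter_univ, univ_inter] using key

/-- Expander mixing lemma for irregular matrix-weighted graphs:
`|tr(E(S,T) - V(S,T))| ≤ |μ̃_{k+1}| √(tr(vol S - V(S,S)) tr(vol T - V(T,T)))`,
where `V(A,B) = vol(A) vol(V)⁻¹ vol(B)`.  Here `R` is the PSD square root of the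
(invertible) degree matrix `D`, so `R⁻¹ A R⁻¹` is the normalized adjacency
matrix, and `mu` enumerates its eigenvalues in order of decreasing absolute
value (0-indexed), with `μ̃_1 = ⋯ = μ̃_k = 1`, witnessed by an orthogonal
spectral decomposition. -/
theorem matrix_weighted_expander_mixing_irregular
    (n k : ℕ) (hn : 2 ≤ n) (G : SimpleGraph (Fin n))
    (W : Fin n → Fin n → Matrix (Fin k) (Fin k) ℝ)
    (hpsd : ∀ u v, (W u v).PosSemidef)
    (hsym : ∀ u v, W u v = W v u)
    (h0 : ∀ u v, ¬ G.Adj u v → W u v = 0)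
    (hDinv : IsUnit (mwDeg n k W).det)
    (R : Matrix (Fin n × Fin k) (Fin n × Fin k) ℝ)
    (hRpsd : R.PosSemidef) (hRsq : R * R = mwDeg n k W)
    (mu : ℕ → ℝ) (hmu : AntitoneOn (fun i => |mu i|) (Set.Iio (n * k)))
    (htop : ∀ i < k, mu i = 1)
    (U : Matrix (Fin n × Fin k) (Fin n × Fin k) ℝ) (hU : U * Uᵀ = 1)
    (hnormAdj : R⁻¹ * mwAdj n k W * R⁻¹ =
      U * Matrix.diagonal (fun p => mu (finProdFinEquiv p)) * Uᵀ)
    (S T : Finset (Fin n)) :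
    |(mwEdge n k W S T -
        mwVol n k W S * (mwVol n k W Finset.univ)⁻¹ * mwVol n k W T).trace| ≤
      |mu k| *
        Real.sqrt
          ((mwVol n k W S -
              mwVol n k W S * (mwVol n k W Finset.univ)⁻¹ * mwVol n k W S).trace *
            (mwVol n k W T -
              mwVol n k W T * (mwVol n k W Finset.univ)⁻¹ * mwVol n k W T).trace) :=
  matrix_weighted_expander_mixing_irregular_general n k hn W hsym hDinv R hRpsd hRsq mu hmu htop U
    hU hnormAdj S T
end
end
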